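/- arXiv:1706.05319 — 4 statements merged into one kernel-verified Lean document; each statement's English description precedes it below -/
import Mathlib

section
/- There exists ε₀ > 0 such that if |α| < ε₀ then the projection T_α : Y → F_α is a bounded linear map: there is a constant c > 0, independent of α and h, such that ‖T_α h‖_Y ≤ c ‖h‖_Y for all h ∈ Y. -/
namespace CSpaper

open MeasureTheory Filter

noncomputable section

/-- The admissible Cartan pairs `(a,b)` for the rank-two Chern-Simons systems
(`SU(3)`, `SO(5)`, `G₂`). -/
def GoodPair (a b : ℝ) : Prop :=
  (a, b) = (1, 1) ∨ (a, b) = (1, 2) ∨ (a, b) = (2, 1) ∨ (a, b) = (1, 3) ∨ (a, b) = (3, 1)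

/-- Classical Laplacian of `u : ℂ → ℝ`, identifying `ℝ²` with `ℂ`. -/
def lap (u : ℂ → ℝ) (x : ℂ) : ℝ :=
  iteratedDeriv 2 (fun t : ℝ => u (x + (t : ℂ))) 0 +
    iteratedDeriv 2 (fun t : ℝ => u (x + (t : ℂ) * Complex.I)) 0

/-- The weight `σ(x) = 1 + |x|`. -/
def sig (x : ℂ) : ℝ := 1 + ‖x‖

/-- `L²` norm. -/
def l2norm (u : ℂ → ℝ) : ℝ := Real.sqrt (∫ x : ℂ, u x ^ 2)

/-- Membership in `L²(ℝ²)`. -/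
def MemL2 (u : ℂ → ℝ) : Prop := Integrable (fun x : ℂ => u x ^ 2)

/-- `H²` norm. -/
def h2norm (u : ℂ → ℝ) : ℝ :=
  l2norm u + l2norm (fun x => ‖fderiv ℝ u x‖) + l2norm (fun x => ‖fderiv ℝ (fderiv ℝ u) x‖)

/-- Membership in `H²(ℝ²)`. -/
def MemH2 (u : ℂ → ℝ) : Prop :=
  ContDiff ℝ 2 u ∧ MemL2 u ∧ MemL2 (fun x => ‖fderiv ℝ u x‖) ∧
    MemL2 fun x => ‖fderiv ℝ (fderiv ℝ u) x‖

/-- The `Y` norm `‖σ^{1+d} h‖_{L²}`. -/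
def Ynorm (d : ℝ) (h : ℂ → ℝ) : ℝ := l2norm fun x => sig x ^ (1 + d) * h x

/-- Membership in the weighted space `Y`. -/
def MemY (d : ℝ) (h : ℂ → ℝ) : Prop := MemL2 fun x => sig x ^ (1 + d) * h x

/-- The `X` norm, `‖v‖_X² = ‖σ^{1+d}Δv‖_{L²}² + ‖σ^{-1-d}v‖_{L²}²`. -/
def Xnorm (d : ℝ) (v : ℂ → ℝ) : ℝ :=
  Real.sqrt (Ynorm d (lap v) ^ 2 + l2norm (fun x => sig x ^ (-(1 + d)) * v x) ^ 2)

/-- Membership in the weighted space `X`. -/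
def MemX (d : ℝ) (v : ℂ → ℝ) : Prop :=
  ContDiff ℝ 2 v ∧ MemY d (lap v) ∧ MemL2 fun x => sig x ^ (-(1 + d)) * v x

/-- `u` is a distributional solution of the Chern-Simons-Higgs equation
`Δu + e^u(1-e^u) = 4π Σ_j δ_{p_j}` on `ℝ²`. -/
def IsCSHSolution {N₁ : ℕ} (p : Fin N₁ → ℂ) (u : ℂ → ℝ) : Prop :=
  LocallyIntegrable u ∧
    ∀ φ : ℂ → ℝ, ContDiff ℝ (⊤ : ℕ∞) φ → HasCompactSupport φ →
      (∫ x : ℂ, u x * lap φ x) +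
          (∫ x : ℂ, Real.exp (u x) * (1 - Real.exp (u x)) * φ x) =
        4 * Real.pi * ∑ j, φ (p j)

/-- Topological boundary condition: `u(x) → 0` as `|x| → ∞`. -/
def IsTopological (u : ℂ → ℝ) : Prop := Tendsto u (cocompact ℂ) (nhds 0)

/-- The linearized operator `L₁ = Δ + e^U(1-2e^U)`. -/
def L1op (U u : ℂ → ℝ) : ℂ → ℝ := fun x =>
  lap u x + Real.exp (U x) * (1 - 2 * Real.exp (U x)) * u x

/-- Non-degeneracy of a topological solution `U`: `L₁` is a continuous bijection from
`H²(ℝ²)` onto `L²(ℝ²)` with continuous inverse. -/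
def Nondegenerate (U : ℂ → ℝ) : Prop :=
  (∃ C > 0, ∀ u, MemH2 u →
      MemL2 (L1op U u) ∧ l2norm (L1op U u) ≤ C * h2norm u ∧
        h2norm u ≤ C * l2norm (L1op U u)) ∧
    ∀ h, MemL2 h → ∃ u, MemH2 u ∧ L1op U u =ᵐ[volume] h

/-- The principal-branch complex power `z^λ`. -/
def zlam (lam : ℝ) (z : ℂ) : ℂ := z ^ (lam : ℂ)

/-- `λ ∈ ℕ`. -/
def lamNat (lam : ℝ) : Prop := ∃ n : ℕ, lam = n

/-- The Liouville profile `W_α` (with `μ = 0`). -/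
def Wa (a b lam : ℝ) (α : ℂ) (z : ℂ) : ℝ :=
  Real.log (32 * lam ^ 2 * ‖z‖ ^ (2 * lam - 2) /
    ((4 - a * b) * (2 + b) * (1 + ‖zlam lam z + α‖ ^ 2) ^ 2))

/-- The regular part `W*_α(z) = W_α(z) - (2λ-2) ln|z|`. -/
def Wstar (a b lam : ℝ) (α : ℂ) (z : ℂ) : ℝ :=
  Wa a b lam α z - (2 * lam - 2) * Real.log (‖z‖)

/-- Kernel element `Z_{α,0}`. -/
def Z0 (lam : ℝ) (α : ℂ) (z : ℂ) : ℝ :=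
  (1 - ‖zlam lam z + α‖ ^ 2) / (1 + ‖zlam lam z + α‖ ^ 2)

/-- Kernel element `Z_{α,1}`. -/
def Z1 (lam : ℝ) (α : ℂ) (z : ℂ) : ℝ :=
  (zlam lam z + α).re / (1 + ‖zlam lam z + α‖ ^ 2)

/-- Kernel element `Z_{α,2}`. -/
def Z2 (lam : ℝ) (α : ℂ) (z : ℂ) : ℝ :=
  (zlam lam z + α).im / (1 + ‖zlam lam z + α‖ ^ 2)

/-- The complex combination `Z_α = Z_{α,1} + i Z_{α,2}`. -/
def Zc (lam : ℝ) (α : ℂ) (z : ℂ) : ℂ :=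
  (zlam lam z + α) / ((1 + (‖zlam lam z + α‖ : ℂ) ^ 2))

/-- The linearized Liouville operator `L_{2,α} v = Δv + (1/4)(4-ab)(2+b)e^{W_α} v`. -/
def L2op (a b lam : ℝ) (α : ℂ) (v : ℂ → ℝ) : ℂ → ℝ := fun x =>
  lap v x + 1 / 4 * (4 - a * b) * (2 + b) * Real.exp (Wa a b lam α x) * v x

/-- The subspace `E_α` of `X`. -/
def MemE (a b lam d : ℝ) (α : ℂ) (ξ : ℂ → ℝ) : Prop :=
  MemX d ξ ∧
    (lamNat lam →
      (∫ x : ℂ, ξ x * Real.exp (Wa a b lam α x) * Z0 lam α x) = 0 ∧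
        (∫ x : ℂ, ξ x * Real.exp (Wa a b lam α x) * Z1 lam α x) = 0 ∧
          (∫ x : ℂ, ξ x * Real.exp (Wa a b lam α x) * Z2 lam α x) = 0) ∧
    (¬lamNat lam → (∫ x : ℂ, ξ x * Real.exp (Wa a b lam 0 x) * Z0 lam 0 x) = 0)

/-- The subspace `F_α` of `Y`. -/
def MemF (lam d : ℝ) (α : ℂ) (h : ℂ → ℝ) : Prop :=
  MemY d h ∧
    (lamNat lam →
      (∫ x : ℂ, h x * Z1 lam α x) = 0 ∧ (∫ x : ℂ, h x * Z2 lam α x) = 0)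

/-- `Lv = T_α g`, where `T_α : Y → F_α` is the projection
`T_α h = h - c_{α,1}σ^{-2-2d}Z_{α,1} - c_{α,2}σ^{-2-2d}Z_{α,2}` if `λ ∈ ℕ`, `T_α h = h` else. -/
def IsTApplied (lam d : ℝ) (α : ℂ) (g Lv : ℂ → ℝ) : Prop :=
  (lamNat lam → MemF lam d α Lv ∧ ∃ c₁ c₂ : ℝ,
      Lv = fun x => g x - c₁ * sig x ^ (-(2 + 2 * d)) * Z1 lam α x
        - c₂ * sig x ^ (-(2 + 2 * d)) * Z2 lam α x) ∧
    (¬lamNat lam → Lv = g)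

/-- A smooth cutoff vanishing on `{|x| ≤ 1/2}` and equal to `1` on `{|x| ≥ 1}`. -/
def IsCutoff (χ : ℂ → ℝ) : Prop :=
  ContDiff ℝ (⊤ : ℕ∞) χ ∧ (∀ x, 0 ≤ χ x ∧ χ x ≤ 1) ∧
    (∀ x : ℂ, ‖x‖ ≤ 1 / 2 → χ x = 0) ∧ ∀ x : ℂ, 1 ≤ ‖x‖ → χ x = 1

/-- `φ_ε(x) = -(ab/2) e^{W_α(εx)} χ(x)`. -/
def phiE (a b lam : ℝ) (α : ℂ) (χ : ℂ → ℝ) (ε : ℝ) (x : ℂ) : ℝ :=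
  -(a * b / 2) * Real.exp (Wa a b lam α ((ε : ℂ) * x)) * χ x

/-- `P_ε(x) = Π_j |x - εp_j|`. -/
def Pprod {N₁ : ℕ} (p : Fin N₁ → ℂ) (ε : ℝ) (x : ℂ) : ℝ :=
  ∏ j, ‖x - (ε : ℂ) * p j‖

/-- `Q_ε(x) = Π_k |x - εq_k|`. -/
def Qprod {N₂ : ℕ} (q : Fin N₂ → ℂ) (ε : ℝ) (x : ℂ) : ℝ :=
  ∏ k, ‖x - (ε : ℂ) * q k‖

/-- First approximate solution `V_{1,ε} = U - ln 2 + ε²φ_ε`. -/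
def V1 (a b lam : ℝ) (α : ℂ) (χ U : ℂ → ℝ) (ε : ℝ) (x : ℂ) : ℝ :=
  U x - Real.log 2 + ε ^ 2 * phiE a b lam α χ ε x

/-- Second approximate solution `V_{2,ε,α}`. -/
def V2 {N₁ N₂ : ℕ} (p : Fin N₁ → ℂ) (q : Fin N₂ → ℂ) (a b lam : ℝ) (α : ℂ)
    (χ U : ℂ → ℝ) (ε : ℝ) (x : ℂ) : ℝ :=
  Wstar a b lam α ((ε : ℂ) * x) + b * Real.log (Pprod p ε ((ε : ℂ) * x)) +
    2 * Real.log (Qprod q ε ((ε : ℂ) * x)) - b / 2 * U x -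
      b / 2 * ε ^ 2 * phiE a b lam α χ ε x

/-- `f(t) = e^t(1-e^t)`. -/
def ff (t : ℝ) : ℝ := Real.exp t * (1 - Real.exp t)

/-- `f'(t) = e^t(1-2e^t)`. -/
def ffp (t : ℝ) : ℝ := Real.exp t * (1 - 2 * Real.exp t)

/-- The error term `g_{1,ε,α}(ξ,η)`. -/
def g1 {N₁ N₂ : ℕ} (p : Fin N₁ → ℂ) (q : Fin N₂ → ℂ) (a b lam : ℝ) (α : ℂ)
    (χ U : ℂ → ℝ) (ε : ℝ) (ξ η : ℂ → ℝ) (x : ℂ) : ℝ :=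
  -(1 / ε ^ 2) * (ff (U x + ε ^ 2 * phiE a b lam α χ ε x + ε ^ 2 * ξ x) - ff (U x)
      - ε ^ 2 * ffp (U x) * (phiE a b lam α χ ε x + ξ x))
    - lap (phiE a b lam α χ ε) x - ffp (U x) * phiE a b lam α χ ε x
    + a * Real.exp (V2 p q a b lam α χ U ε x - b / 2 * ε ^ 2 * ξ x + ε ^ 2 * η ((ε : ℂ) * x))
    + a * (b - 2) * Real.exp (V1 a b lam α χ U ε x + V2 p q a b lam α χ U ε x
        + (2 - b) / 2 * ε ^ 2 * ξ x + ε ^ 2 * η ((ε : ℂ) * x))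
    - 2 * a * ε ^ 2 * Real.exp (2 * V2 p q a b lam α χ U ε x - b * ε ^ 2 * ξ x
        + 2 * ε ^ 2 * η ((ε : ℂ) * x))

/-- The error term `g_{2,ε,α}(ξ,η)`. -/
def g2 {N₁ N₂ : ℕ} (p : Fin N₁ → ℂ) (q : Fin N₂ → ℂ) (a b lam : ℝ) (α : ℂ)
    (χ U : ℂ → ℝ) (ε : ℝ) (ξ η : ℂ → ℝ) (x : ℂ) : ℝ :=
  -((4 - a * b) / (2 * ε ^ 2)) * Real.exp (V2 p q a b lam α χ U ε (x / (ε : ℂ))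
      - b / 2 * ε ^ 2 * ξ (x / (ε : ℂ)) + ε ^ 2 * η x)
    - b * (4 - a * b) / (2 * ε ^ 2) * Real.exp (V1 a b lam α χ U ε (x / (ε : ℂ))
        + V2 p q a b lam α χ U ε (x / (ε : ℂ)) + (2 - b) / 2 * ε ^ 2 * ξ (x / (ε : ℂ))
        + ε ^ 2 * η x)
    + 1 / (4 * ε ^ 2) * (4 - a * b) * (2 + b) * Real.exp (Wa a b lam α x) * (1 + ε ^ 2 * η x)
    + (4 - a * b) * Real.exp (2 * V2 p q a b lam α χ U ε (x / (ε : ℂ))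
        - b * ε ^ 2 * ξ (x / (ε : ℂ)) + 2 * ε ^ 2 * η x)

/-- Membership in the ball `S₀ ⊆ H²(ℝ²) × E_α`. -/
def MemS0 (a b lam d : ℝ) (α : ℂ) (M₀ : ℝ) (ξ η : ℂ → ℝ) : Prop :=
  MemH2 ξ ∧ MemE a b lam d α η ∧ h2norm ξ + Xnorm d η ≤ M₀

/-- The real dot product of `ℝ² ≃ ℂ`. -/
def dotR (u v : ℂ) : ℝ := u.re * v.re + u.im * v.im

/-- The quadrupole function `A(x)`. -/
def Afun {N₁ N₂ : ℕ} (p : Fin N₁ → ℂ) (q : Fin N₂ → ℂ) (b : ℝ) (x : ℂ) : ℝ :=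
  (1 / ‖x‖ ^ 2) *
      (b / 2 * ∑ j, ‖p j‖ ^ 2 + ∑ k, ‖q k‖ ^ 2) -
    (1 / ‖x‖ ^ 4) *
      ((∑ j, b * dotR (p j) x ^ 2) + ∑ k, 2 * dotR (q k) x ^ 2)

/-- `H_ε(x) = b ln P_ε(x) + 2 ln Q_ε(x) - (bN₁ + 2N₂) ln|x|`. -/
def Hfun {N₁ N₂ : ℕ} (p : Fin N₁ → ℂ) (q : Fin N₂ → ℂ) (b ε : ℝ) (x : ℂ) : ℝ :=
  b * Real.log (Pprod p ε x) + 2 * Real.log (Qprod q ε x) -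
    (b * (N₁ : ℝ) + 2 * (N₂ : ℝ)) * Real.log (‖x‖)

/-- `R₀ = 1 + 5 max_{j,k} {|p_j|, |q_k|}`. -/
def R0 {N₁ N₂ : ℕ} (p : Fin N₁ → ℂ) (q : Fin N₂ → ℂ) : ℝ :=
  1 + 5 * (((Finset.univ.sup fun j => (‖p j‖).toNNReal) ⊔
      Finset.univ.sup fun k => (‖q k‖).toNNReal : NNReal) : ℝ)

/-- The bubbling coefficient `Δ(α)`. -/
def Delta {N₁ N₂ : ℕ} (p : Fin N₁ → ℂ) (q : Fin N₂ → ℂ) (a b lam : ℝ) (α : ℂ) : ℂ :=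
  (-8 * lam ^ 2 : ℂ) *
      ∫ x : ℂ, ((‖x‖ ^ (2 * lam - 2) * Afun p q b x /
            (1 + ‖zlam lam x + α‖ ^ 2) ^ 3 : ℝ) : ℂ) * (zlam lam x + α)
    + ((64 * lam ^ 4 * (16 - a * b ^ 3) / ((4 - a * b) * (2 + b) ^ 2) : ℝ) : ℂ) *
      ∫ x : ℂ, ((‖x‖ ^ (4 * lam - 4) /
            (1 + ‖zlam lam x + α‖ ^ 2) ^ 5 : ℝ) : ℂ) * (zlam lam x + α)

/-- `(u₁,u₂)` is a distributional solution of the rank-two Chern-Simons system. -/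
def IsSystemSolution {N₁ N₂ : ℕ} (p : Fin N₁ → ℂ) (q : Fin N₂ → ℂ) (a b : ℝ)
    (u₁ u₂ : ℂ → ℝ) : Prop :=
  LocallyIntegrable u₁ ∧ LocallyIntegrable u₂ ∧
    (∀ φ : ℂ → ℝ, ContDiff ℝ (⊤ : ℕ∞) φ → HasCompactSupport φ →
      (∫ x : ℂ, u₁ x * lap φ x) +
          (∫ x : ℂ, (2 * Real.exp (u₁ x) - a * Real.exp (u₂ x) - 4 * Real.exp (2 * u₁ x)
            + 2 * a * Real.exp (2 * u₂ x) - a * (b - 2) * Real.exp (u₁ x + u₂ x)) * φ x) =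
        4 * Real.pi * ∑ j, φ (p j)) ∧
    ∀ φ : ℂ → ℝ, ContDiff ℝ (⊤ : ℕ∞) φ → HasCompactSupport φ →
      (∫ x : ℂ, u₂ x * lap φ x) +
          (∫ x : ℂ, (2 * Real.exp (u₂ x) - b * Real.exp (u₁ x) - 4 * Real.exp (2 * u₂ x)
            + 2 * b * Real.exp (2 * u₁ x) - b * (a - 2) * Real.exp (u₁ x + u₂ x)) * φ x) =
        4 * Real.pi * ∑ k, φ (q k)

/-- `W` is a distributional solution of the Liouville equation
`ΔW + (1/4)(4-ab)(2+b)e^W = 2πm δ₀` with `e^W ∈ L¹(ℝ²)`. -/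
def IsLiouville (a b m : ℝ) (W : ℂ → ℝ) : Prop :=
  LocallyIntegrable W ∧ Integrable (fun x : ℂ => Real.exp (W x)) ∧
    ∀ φ : ℂ → ℝ, ContDiff ℝ (⊤ : ℕ∞) φ → HasCompactSupport φ →
      (∫ x : ℂ, W x * lap φ x) +
          (∫ x : ℂ, 1 / 4 * (4 - a * b) * (2 + b) * Real.exp (W x) * φ x) =
        2 * Real.pi * m * φ 0

open Polynomial in
private lemma slice_finite (n : ℕ) (hn : n ≠ 0) (y c : ℝ) :
    {x : ℝ | (((x : ℂ) + (y : ℂ) * Complex.I) ^ n).re = c}.Finite := by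
  set K : Polynomial ℂ :=
    (X + C ((y : ℂ) * Complex.I)) ^ n + (X + C (-((y : ℂ) * Complex.I))) ^ n - C (2 * (c : ℂ))
    with hKdef
  have hcoeff : K.coeff n = 2 := by
    have h1 := coeff_X_add_C_pow ((y : ℂ) * Complex.I) n n
    have h2 := coeff_X_add_C_pow (-((y : ℂ) * Complex.I)) n n
    simp only [Nat.sub_self, pow_zero, Nat.choose_self, Nat.cast_one, one_mul] at h1 h2
    rw [hKdef, coeff_sub, coeff_add, h1, h2, coeff_C]
    simp [hn]
    norm_num
  have hK0 : K ≠ 0 := by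
    intro h
    rw [h] at hcoeff
    simp at hcoeff
  have hfin : {z : ℂ | K.IsRoot z}.Finite := Polynomial.finite_setOf_isRoot hK0
  have hsub : {x : ℝ | (((x : ℂ) + (y : ℂ) * Complex.I) ^ n).re = c} ⊆
      (fun x : ℝ => (x : ℂ)) ⁻¹' {z : ℂ | K.IsRoot z} := by
    intro x hx
    simp only [Set.mem_setOf_eq] at hx
    have hconj : ((x : ℂ) + -((y : ℂ) * Complex.I)) ^ n
        = (starRingEnd ℂ) (((x : ℂ) + (y : ℂ) * Complex.I) ^ n) := by
      rw [map_pow, map_add, Complex.conj_ofReal, map_mul, Complex.conj_ofReal, Complex.conj_I]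
      ring_nf
    show K.IsRoot (x : ℂ)
    have : K.eval (x : ℂ) = 0 := by
      simp only [hKdef, eval_sub, eval_add, eval_pow, eval_X, eval_C, hconj]
      rw [Complex.add_conj, hx]
      push_cast
      ring
    exact this
  exact ((hfin.preimage Complex.ofReal_injective.injOn).subset hsub)

private lemma null_re_pow (n : ℕ) (hn : n ≠ 0) (c : ℝ) :
    volume {z : ℂ | (z ^ n).re = c} = 0 := by
  set S : Set (ℝ × ℝ) := {p : ℝ × ℝ | (((p.2 : ℂ) + (p.1 : ℂ) * Complex.I) ^ n).re = c} with hS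
  have hmeasS : MeasurableSet S := by
    have hcont : Continuous fun p : ℝ × ℝ => (((p.2 : ℂ) + (p.1 : ℂ) * Complex.I) ^ n).re := by
      fun_prop
    exact (isClosed_eq hcont continuous_const).measurableSet
  have hSnull : (volume : Measure (ℝ × ℝ)) S = 0 := by
    rw [Measure.volume_eq_prod, Measure.measure_prod_null hmeasS]
    refine Filter.Eventually.of_forall fun y => ?_
    have hpre : (Prod.mk y ⁻¹' S) =
        {x : ℝ | (((x : ℂ) + (y : ℂ) * Complex.I) ^ n).re = c} := rfl
    show volume (Prod.mk y ⁻¹' S) = 0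
    rw [hpre]
    exact (slice_finite n hn y c).measure_zero _
  have hmp : MeasurePreserving (Prod.swap ∘ ⇑Complex.measurableEquivRealProd)
      (volume : Measure ℂ) (volume : Measure (ℝ × ℝ)) := by
    have h2 : MeasurePreserving (Prod.swap : ℝ × ℝ → ℝ × ℝ) volume volume := by
      rw [Measure.volume_eq_prod]
      exact Measure.measurePreserving_swap
    exact h2.comp Complex.volume_preserving_equiv_real_prod
  have hpre : {z : ℂ | (z ^ n).re = c}
      = (Prod.swap ∘ ⇑Complex.measurableEquivRealProd) ⁻¹' S := by
    ext z
    simp only [Set.mem_setOf_eq, Set.mem_preimage, hS, Function.comp_apply,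
      Complex.measurableEquivRealProd_apply, Prod.swap_prod_mk]
    rw [Complex.re_add_im]
  rw [hpre, hmp.measure_preimage hmeasS.nullMeasurableSet]
  exact hSnull

private lemma null_re_gen (n : ℕ) (hn : n ≠ 0) (γ : ℂ) (hγ : γ ≠ 0) (α : ℂ) :
    volume {z : ℂ | (γ * (z ^ n + α)).re = 0} = 0 := by
  obtain ⟨ω, hω⟩ := IsAlgClosed.exists_pow_nat_eq (starRingEnd ℂ γ) (Nat.pos_of_ne_zero hn)
  have hω0 : ω ≠ 0 := by
    rintro rfl
    rw [zero_pow hn] at hω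
    exact hγ (by simpa using hω.symm)
  set e : ℂ ≃ₗ[ℝ] ℂ := (LinearEquiv.smulOfNeZero ℂ ℂ ω hω0).restrictScalars ℝ with he
  have hdet : LinearMap.det (e : ℂ →ₗ[ℝ] ℂ) ≠ 0 := e.isUnit_det'.ne_zero
  have key := Measure.addHaar_preimage_linearMap (volume : Measure ℂ) hdet
    {z : ℂ | (γ * (z ^ n + α)).re = 0}
  have hns : 0 < Complex.normSq γ := Complex.normSq_pos.mpr hγ
  have hpre : (e : ℂ →ₗ[ℝ] ℂ) ⁻¹' {z : ℂ | (γ * (z ^ n + α)).re = 0}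
      = {z : ℂ | (z ^ n).re = -(γ * α).re / Complex.normSq γ} := by
    ext z
    have he1 : (e : ℂ →ₗ[ℝ] ℂ) z = ω * z := rfl
    simp only [Set.mem_preimage, Set.mem_setOf_eq, he1]
    have hexp : γ * ((ω * z) ^ n + α) = (Complex.normSq γ : ℂ) * z ^ n + γ * α := by
      rw [mul_pow, hω, ← Complex.mul_conj]
      ring
    rw [hexp, Complex.add_re, Complex.re_ofReal_mul]
    rw [eq_div_iff hns.ne']
    constructor
    · intro h0; nlinarith
    · intro h0; nlinarith
  rw [hpre, null_re_pow n hn _] at key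
  rcases mul_eq_zero.mp key.symm with h0 | h0
  · exfalso
    rw [ENNReal.ofReal_eq_zero] at h0
    have : (LinearMap.det (e : ℂ →ₗ[ℝ] ℂ))⁻¹ ≠ 0 := inv_ne_zero hdet
    have := abs_pos.mpr this
    linarith
  · exact h0


set_option maxHeartbeats 2000000 in
theorem projection_bounded
    (a b : ℝ) (hab : GoodPair a b) (N₁ N₂ : ℕ) (lam d : ℝ)
    (hlam : lam = b * (N₁ : ℝ) / 2 + (N₂ : ℝ) + 1) (hd : 0 < d) (hd' : d < 1 / 4) :
    ∃ ε₀ > 0, ∃ c > 0, ∀ α : ℂ, ‖α‖ < ε₀ →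
      ∀ h Th : ℂ → ℝ, MemY d h → IsTApplied lam d α h Th →
        Ynorm d Th ≤ c * Ynorm d h := by
  refine ⟨1, one_pos, 1, one_pos, fun α _ h Th hY hT => ?_⟩
  rw [one_mul]
  by_cases hnat : lamNat lam
  case neg =>
    rw [hT.2 hnat]
  case pos =>
    obtain ⟨⟨hThY, horth⟩, c₁, c₂, hTh⟩ := hT.1 hnat
    obtain ⟨ho1, ho2⟩ := horth hnat
    obtain ⟨n, hn⟩ := hnat
    have hb : (0 : ℝ) ≤ b := by
      rcases hab with h' | h' | h' | h' | h' <;>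
        simp only [Prod.mk.injEq] at h' <;> linarith [h'.2]
    have hlam1 : (1 : ℝ) ≤ lam := by
      rw [hlam]
      have h1 : (0 : ℝ) ≤ (N₁ : ℝ) := Nat.cast_nonneg _
      have h2 : (0 : ℝ) ≤ (N₂ : ℝ) := Nat.cast_nonneg _
      nlinarith
    have hn0 : n ≠ 0 := by
      rintro rfl
      rw [hn] at hlam1
      norm_num at hlam1
    have hzlam : ∀ z : ℂ, zlam lam z = z ^ n := fun z => by
      rw [zlam, hn, Complex.ofReal_natCast, Complex.cpow_natCast]
    have hsigpos : ∀ x : ℂ, 0 < sig x := fun x => by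
      have : (0 : ℝ) ≤ ‖x‖ := norm_nonneg _
      rw [sig]; linarith
    -- the five main functions
    set H : ℂ → ℝ := fun x => sig x ^ (1 + d) * h x with hHdef
    set T : ℂ → ℝ := fun x => sig x ^ (1 + d) * Th x with hTdef
    set u₁ : ℂ → ℝ := fun x => sig x ^ (-(1 + d)) * Z1 lam α x with hu1def
    set u₂ : ℂ → ℝ := fun x => sig x ^ (-(1 + d)) * Z2 lam α x with hu2def
    set v : ℂ → ℝ := fun x => c₁ * u₁ x + c₂ * u₂ x with hvdef
    -- T = H - v pointwise
    have hTHv : ∀ x, T x = H x - v x := by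
      intro x
      have e1 : sig x ^ (-(1 + d)) = sig x ^ (1 + d) * sig x ^ (-(2 + 2 * d)) := by
        rw [← Real.rpow_add (hsigpos x)]
        congr 1
        ring
      simp only [hTdef, hHdef, hvdef, hu1def, hu2def, hTh, e1]
      ring
    -- integrability of the squares
    have IH2 : Integrable (fun x : ℂ => H x ^ 2) := hY
    have IT2 : Integrable (fun x : ℂ => T x ^ 2) := hThY
    have hIw : Integrable (fun x : ℂ => sig x ^ (-(2 + 2 * d))) := by
      have h2d : (Module.finrank ℝ ℂ : ℝ) < 2 + 2 * d := by
        rw [Complex.finrank_real_complex]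
        norm_num
        linarith
      have := integrable_one_add_norm (E := ℂ) (μ := volume) h2d
      have heq : (fun x : ℂ => (1 + ‖x‖) ^ (-(2 + 2 * d)))
          = fun x : ℂ => sig x ^ (-(2 + 2 * d)) := by
        funext x
        rw [sig]
      rwa [heq] at this
    -- bounds on Z1, Z2
    have habs1 : ∀ x, |Z1 lam α x| ≤ 1 := by
      intro x
      rw [Z1]
      set w := zlam lam x + α
      have h1 : 0 < 1 + ‖w‖ ^ 2 := by positivity
      rw [abs_div, abs_of_pos h1, div_le_one h1]
      have h2 : |w.re| ≤ ‖w‖ := Complex.abs_re_le_norm w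
      nlinarith [norm_nonneg w, sq_nonneg (‖w‖ - 1)]
    have habs2 : ∀ x, |Z2 lam α x| ≤ 1 := by
      intro x
      rw [Z2]
      set w := zlam lam x + α
      have h1 : 0 < 1 + ‖w‖ ^ 2 := by positivity
      rw [abs_div, abs_of_pos h1, div_le_one h1]
      have h2 : |w.im| ≤ ‖w‖ := Complex.abs_im_le_norm w
      nlinarith [norm_nonneg w, sq_nonneg (‖w‖ - 1)]
    -- continuity
    have hsigc : Continuous sig := by
      have : sig = fun x : ℂ => 1 + ‖x‖ := rfl
      rw [this]
      exact continuous_const.add continuous_norm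
    have hsrpow : ∀ r : ℝ, Continuous (fun x : ℂ => sig x ^ r) := fun r =>
      hsigc.rpow_const fun x => Or.inl (hsigpos x).ne'
    have hZ1c : Continuous (Z1 lam α) := by
      have hq : Z1 lam α = fun z : ℂ =>
          (z ^ n + α).re / (1 + ‖z ^ n + α‖ ^ 2) := by
        funext z
        rw [Z1, hzlam]
      rw [hq]
      apply Continuous.div (Complex.continuous_re.comp ((continuous_pow n).add continuous_const))
        (continuous_const.add ((continuous_norm.comp
          ((continuous_pow n).add continuous_const)).pow 2))
      intro x
      exact (by positivity : (0 : ℝ) < 1 + ‖x ^ n + α‖ ^ 2).ne'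
    have hZ2c : Continuous (Z2 lam α) := by
      have hq : Z2 lam α = fun z : ℂ =>
          (z ^ n + α).im / (1 + ‖z ^ n + α‖ ^ 2) := by
        funext z
        rw [Z2, hzlam]
      rw [hq]
      apply Continuous.div (Complex.continuous_im.comp ((continuous_pow n).add continuous_const))
        (continuous_const.add ((continuous_norm.comp
          ((continuous_pow n).add continuous_const)).pow 2))
      intro x
      exact (by positivity : (0 : ℝ) < 1 + ‖x ^ n + α‖ ^ 2).ne'
    have hu1c : Continuous u₁ := (hsrpow _).mul hZ1c
    have hu2c : Continuous u₂ := (hsrpow _).mul hZ2c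
    have hvc : Continuous v := ((continuous_const.mul hu1c).add (continuous_const.mul hu2c))
    -- integrability of u₁², u₂², v²
    have hre : ∀ x : ℂ, sig x ^ (-(1 + d)) * sig x ^ (-(1 + d)) = sig x ^ (-(2 + 2 * d)) := by
      intro x
      rw [← Real.rpow_add (hsigpos x)]
      congr 1
      ring
    have hIu1 : Integrable (fun x : ℂ => u₁ x ^ 2) := by
      refine hIw.mono' ((hu1c.pow 2).aestronglyMeasurable) ?_
      filter_upwards with x
      rw [Real.norm_eq_abs, abs_of_nonneg (sq_nonneg _), ← hre x]
      have h0 : 0 ≤ sig x ^ (-(1 + d)) := (Real.rpow_pos_of_pos (hsigpos x) _).le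
      have h1 := habs1 x
      have h2 : Z1 lam α x ^ 2 ≤ 1 := by nlinarith [abs_nonneg (Z1 lam α x), sq_abs (Z1 lam α x)]
      simp only [hu1def]
      nlinarith [sq_nonneg (sig x ^ (-(1 + d)))]
    have hIu2 : Integrable (fun x : ℂ => u₂ x ^ 2) := by
      refine hIw.mono' ((hu2c.pow 2).aestronglyMeasurable) ?_
      filter_upwards with x
      rw [Real.norm_eq_abs, abs_of_nonneg (sq_nonneg _), ← hre x]
      have h0 : 0 ≤ sig x ^ (-(1 + d)) := (Real.rpow_pos_of_pos (hsigpos x) _).le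
      have h1 := habs2 x
      have h2 : Z2 lam α x ^ 2 ≤ 1 := by nlinarith [abs_nonneg (Z2 lam α x), sq_abs (Z2 lam α x)]
      simp only [hu2def]
      nlinarith [sq_nonneg (sig x ^ (-(1 + d)))]
    have Iv2 : Integrable (fun x : ℂ => v x ^ 2) := by
      refine Integrable.mono' (((hIu1.const_mul (2 * c₁ ^ 2)).add
        (hIu2.const_mul (2 * c₂ ^ 2)))) ((hvc.pow 2).aestronglyMeasurable) ?_
      filter_upwards with x
      rw [Real.norm_eq_abs, abs_of_nonneg (sq_nonneg _)]
      simp only [hvdef, Pi.add_apply]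
      nlinarith [sq_nonneg (c₁ * u₁ x - c₂ * u₂ x), sq_nonneg (c₁ * u₁ x + c₂ * u₂ x)]
    -- the product Hv and Tv
    set Hv : ℂ → ℝ := fun x => (H x ^ 2 + v x ^ 2 - T x ^ 2) / 2 with hHvdef
    have hIHv : Integrable Hv := ((IH2.add Iv2).sub IT2).div_const 2
    set Tv : ℂ → ℝ := fun x => Hv x - v x ^ 2 with hTvdef
    have hITv : Integrable Tv := hIHv.sub Iv2
    have hTv_eq : ∀ x, Tv x = T x * v x := by
      intro x
      simp only [hTvdef, hHvdef]
      rw [hTHv x]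
      ring
    -- pointwise identities  Th·Zᵢ = T·uᵢ
    have hone : ∀ x : ℂ, sig x ^ (1 + d) * sig x ^ (-(1 + d)) = 1 := by
      intro x
      rw [← Real.rpow_add (hsigpos x), show (1 + d) + -(1 + d) = 0 by ring, Real.rpow_zero]
    have hpt1 : ∀ x, Th x * Z1 lam α x = T x * u₁ x := by
      intro x
      simp only [hTdef, hu1def]
      linear_combination (Th x * Z1 lam α x) * (hone x).symm
    have hpt2 : ∀ x, Th x * Z2 lam α x = T x * u₂ x := by
      intro x
      simp only [hTdef, hu2def]
      linear_combination (Th x * Z2 lam α x) * (hone x).symm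
    -- ∫ Tv = 0
    have hintTv : ∫ x : ℂ, Tv x = 0 := by
      by_cases hc : c₁ = 0 ∧ c₂ = 0
      · have hz : Tv = fun _ => (0 : ℝ) := by
          funext x
          rw [hTv_eq x]
          simp [hvdef, hc.1, hc.2]
        rw [hz]
        exact integral_zero _ _
      · -- v ≠ 0 a.e., so T is a.e. strongly measurable
        set γ : ℂ := (c₁ : ℂ) - (c₂ : ℂ) * Complex.I with hγdef
        have hγ0 : γ ≠ 0 := by
          intro hγ
          apply hc
          have hre : γ.re = c₁ := by simp [hγdef]
          have him : γ.im = -c₂ := by simp [hγdef]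
          rw [hγ] at hre him
          simp at hre him
          exact ⟨hre.symm, by linarith [him]⟩
        have hvnull : volume {x : ℂ | v x = 0} = 0 := by
          refine measure_mono_null ?_ (null_re_gen n hn0 γ hγ0 α)
          intro x hx
          simp only [Set.mem_setOf_eq] at hx ⊢
          have hp : 0 < sig x ^ (-(1 + d)) := Real.rpow_pos_of_pos (hsigpos x) _
          have h1 : c₁ * Z1 lam α x + c₂ * Z2 lam α x = 0 := by
            have h2 : sig x ^ (-(1 + d)) * (c₁ * Z1 lam α x + c₂ * Z2 lam α x) = 0 := by
              rw [← hx]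
              simp only [hvdef, hu1def, hu2def]
              ring
            rcases mul_eq_zero.mp h2 with h3 | h3
            · exact absurd h3 hp.ne'
            · exact h3
          set w := zlam lam x + α with hwdef
          have hden : (0 : ℝ) < 1 + ‖w‖ ^ 2 := by positivity
          have h2 : c₁ * w.re + c₂ * w.im = 0 := by
            rw [Z1, Z2, ← hwdef] at h1
            field_simp at h1
            linarith
          rw [← hzlam x, ← hwdef]
          have : (γ * w).re = c₁ * w.re + c₂ * w.im := by
            simp [hγdef, Complex.mul_re]
            try ring
          rw [this]
          exact h2
        have hvne : ∀ᵐ x : ℂ, v x ≠ 0 := by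
          rw [ae_iff]
          simpa using hvnull
        have hTaesm : AEStronglyMeasurable T volume := by
          have hq : AEStronglyMeasurable (fun x => Tv x / v x) volume :=
            ((hITv.aemeasurable.div hvc.measurable.aemeasurable).aestronglyMeasurable)
          refine hq.congr ?_
          filter_upwards [hvne] with x hx
          rw [hTv_eq x]
          field_simp
        have hITZ1 : Integrable (fun x : ℂ => Th x * Z1 lam α x) := by
          have heq : (fun x : ℂ => Th x * Z1 lam α x) = fun x => T x * u₁ x := funext hpt1
          rw [heq]
          refine Integrable.mono' ((IT2.add hIu1).div_const 2)
            (hTaesm.mul hu1c.aestronglyMeasurable) ?_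
          filter_upwards with x
          rw [Real.norm_eq_abs, abs_mul]
          simp only [Pi.add_apply]
          nlinarith [sq_nonneg (|T x| - |u₁ x|), sq_abs (T x), sq_abs (u₁ x),
            abs_nonneg (T x), abs_nonneg (u₁ x)]
        have hITZ2 : Integrable (fun x : ℂ => Th x * Z2 lam α x) := by
          have heq : (fun x : ℂ => Th x * Z2 lam α x) = fun x => T x * u₂ x := funext hpt2
          rw [heq]
          refine Integrable.mono' ((IT2.add hIu2).div_const 2)
            (hTaesm.mul hu2c.aestronglyMeasurable) ?_
          filter_upwards with x
          rw [Real.norm_eq_abs, abs_mul]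
          simp only [Pi.add_apply]
          nlinarith [sq_nonneg (|T x| - |u₂ x|), sq_abs (T x), sq_abs (u₂ x),
            abs_nonneg (T x), abs_nonneg (u₂ x)]
        have hTv2 : Tv = fun x => c₁ * (Th x * Z1 lam α x) + c₂ * (Th x * Z2 lam α x) := by
          funext x
          rw [hTv_eq x, hpt1 x, hpt2 x]
          simp only [hvdef]
          ring
        rw [hTv2, integral_add (hITZ1.const_mul c₁) (hITZ2.const_mul c₂),
          integral_const_mul, integral_const_mul, ho1, ho2]
        ring
    -- conclude
    have hHveq : ∫ x : ℂ, Hv x = ∫ x : ℂ, v x ^ 2 := by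
      have hs := integral_sub hIHv Iv2
      have : ∫ x : ℂ, (Hv x - v x ^ 2) = 0 := hintTv
      rw [this] at hs
      linarith [hs]
    have hkey : ∫ x : ℂ, T x ^ 2 ≤ ∫ x : ℂ, H x ^ 2 := by
      have hpt : (fun x : ℂ => T x ^ 2) = fun x => (H x ^ 2 + v x ^ 2) - 2 * Hv x := by
        funext x
        simp only [hHvdef]
        ring
      have hi1 : Integrable (fun x : ℂ => H x ^ 2 + v x ^ 2) := IH2.add Iv2
      have hi2 : Integrable (fun x : ℂ => 2 * Hv x) := hIHv.const_mul 2
      rw [hpt, integral_sub hi1 hi2, integral_add IH2 Iv2, integral_const_mul, hHveq]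
      have hv2nn : 0 ≤ ∫ x : ℂ, v x ^ 2 := integral_nonneg fun x => sq_nonneg _
      linarith
    show Real.sqrt (∫ x : ℂ, T x ^ 2) ≤ Real.sqrt (∫ x : ℂ, H x ^ 2)
    exact Real.sqrt_le_sqrt hkey


end

end CSpaper
end

section
/- Let λ ∈ ℕ with λ ≥ 3, and identify x = (x₁,x₂) ∈ ℝ² with z = x₁ + ix₂. Then the following integrals vanish: (i) ∫_{ℝ²} |z|^{2λ−2} z^λ A(z) / (1+|z|^{2λ})³ dx = 0 (ℂ-valued), (ii) ∫_{ℝ²} |z|^{4λ−4} z^λ / (1+|z|^{2λ})^5 dx = 0 (ℂ-valued), and (iii) ∫_{ℝ²} |x|^{2λ−2}(1 − 2|x|^{2λ}) A(x) / (1+|x|^{2λ})⁴ dx = 0. -/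
namespace CSpaper

open MeasureTheory Filter

noncomputable section

/-- Rotation by a unimodular complex number preserves integrals over `ℂ`. -/
lemma rot_integral {E : Type*} [NormedAddCommGroup E] [NormedSpace ℝ E]
    (ω : ℂ) (hω : ‖ω‖ = 1) (f : ℂ → E) :
    ∫ z : ℂ, f (ω * z) = ∫ z : ℂ, f z := by
  have hmem : ω ∈ Metric.sphere (0:ℂ) 1 := by rwa [mem_sphere_zero_iff_norm]
  have hmp : MeasurePreserving (fun z : ℂ => ω * z) volume volume := by
    have h : MeasurePreserving (rotation (⟨ω, hmem⟩ : Circle)) volume volume :=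
      (rotation (⟨ω, hmem⟩ : Circle)).measurePreserving
    convert h using 1
    ext z; rfl
  exact hmp.integral_comp ((rotation (⟨ω, hmem⟩ : Circle)).toHomeomorph.measurableEmbedding) f

lemma rot_zero (ω c : ℂ) (hω : ‖ω‖ = 1) (hc : c ≠ 1) (f : ℂ → ℂ)
    (hf : ∀ z, f (ω * z) = c * f z) : ∫ z : ℂ, f z = 0 := by
  have h1 := rot_integral ω hω f
  simp_rw [hf, integral_const_mul] at h1
  have h2 : (c - 1) * ∫ z : ℂ, f z = 0 := by rw [sub_mul, h1]; ring
  rcases mul_eq_zero.1 h2 with h | h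
  · exact absurd (sub_eq_zero.1 h) hc
  · exact h

lemma rot_neg_zero (ω : ℂ) (hω : ‖ω‖ = 1) (f : ℂ → ℝ)
    (hf : ∀ z, f (ω * z) = - f z) : ∫ z : ℂ, f z = 0 := by
  have h1 := rot_integral ω hω f
  simp_rw [hf, integral_neg] at h1
  linarith

lemma exists_root (m : ℕ) (hm : m ≠ 0) : ∃ ω : ℂ, ‖ω‖ = 1 ∧ ω ^ m = -1 := by
  refine ⟨Complex.exp ((Real.pi / m : ℝ) * Complex.I), Complex.norm_exp_ofReal_mul_I _, ?_⟩
  rw [← Complex.exp_nat_mul]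
  have h : (m : ℂ) * ((Real.pi / m : ℝ) * Complex.I) = (Real.pi : ℂ) * Complex.I := by
    have hm' : (m : ℂ) ≠ 0 := Nat.cast_ne_zero.2 hm
    push_cast
    field_simp
  rw [h, Complex.exp_pi_mul_I]

lemma afun_decomp {N₁ N₂ : ℕ} (p : Fin N₁ → ℂ) (q : Fin N₂ → ℂ) (b : ℝ) (z : ℂ) :
    Afun p q b z =
      -((starRingEnd ℂ ((∑ j, (b:ℂ) * p j ^ 2) + ∑ k, 2 * q k ^ 2) * z ^ 2).re) /
        (2 * ‖z‖ ^ 4) := by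
  by_cases hz : z = 0
  · simp [Afun, hz]
  have habs : ‖z‖ ≠ 0 := by simpa using hz
  have key : ∀ (c : ℝ) (w : ℂ), c * dotR w z ^ 2 =
      (((c:ℂ) * starRingEnd ℂ (w ^ 2) * z ^ 2).re) / 2
        + c * (‖w‖ ^ 2 * ‖z‖ ^ 2) / 2 := by
    intro c w
    simp only [Complex.sq_norm, Complex.normSq_apply]
    simp only [dotR, pow_two, Complex.mul_re, Complex.mul_im, Complex.conj_re, Complex.conj_im,
      Complex.ofReal_re, Complex.ofReal_im]
    ring
  have hsum : (∑ j, b * dotR (p j) z ^ 2) + ∑ k, 2 * dotR (q k) z ^ 2 =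
      ((starRingEnd ℂ ((∑ j, (b:ℂ) * p j ^ 2) + ∑ k, 2 * q k ^ 2) * z ^ 2).re) / 2
        + (b / 2 * ∑ j, ‖(p j)‖ ^ 2 + ∑ k, ‖(q k)‖ ^ 2)
          * ‖z‖ ^ 2 := by
    have hC : starRingEnd ℂ ((∑ j, (b:ℂ) * p j ^ 2) + ∑ k, 2 * q k ^ 2) * z ^ 2 =
        (∑ j, (b:ℂ) * starRingEnd ℂ (p j ^ 2) * z ^ 2)
          + ∑ k, (2:ℂ) * starRingEnd ℂ (q k ^ 2) * z ^ 2 := by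
      rw [map_add, map_sum, map_sum, add_mul, Finset.sum_mul, Finset.sum_mul]
      congr 1 <;> refine Finset.sum_congr rfl fun i _ => ?_ <;>
        simp [map_mul, Complex.conj_ofReal, map_ofNat] <;> ring
    rw [hC, Complex.add_re, Complex.re_sum, Complex.re_sum]
    have h1 : ∀ j, b * dotR (p j) z ^ 2 =
        (((b:ℂ) * starRingEnd ℂ (p j ^ 2) * z ^ 2).re) / 2
          + b * (‖(p j)‖ ^ 2 * ‖z‖ ^ 2) / 2 := fun j => key b (p j)
    have h2 : ∀ k, 2 * dotR (q k) z ^ 2 =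
        (((2:ℂ) * starRingEnd ℂ (q k ^ 2) * z ^ 2).re) / 2
          + 2 * (‖(q k)‖ ^ 2 * ‖z‖ ^ 2) / 2 := by
      intro k
      simpa using key 2 (q k)
    simp_rw [h1, h2, Finset.sum_add_distrib]
    have e1 : ∑ j, b * (‖(p j)‖ ^ 2 * ‖z‖ ^ 2) / 2
        = (b / 2 * ∑ j, ‖(p j)‖ ^ 2) * ‖z‖ ^ 2 := by
      rw [Finset.mul_sum, Finset.sum_mul]
      exact Finset.sum_congr rfl fun j _ => by ring
    have e2 : ∑ k, 2 * (‖(q k)‖ ^ 2 * ‖z‖ ^ 2) / 2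
        = (∑ k, ‖(q k)‖ ^ 2) * ‖z‖ ^ 2 := by
      rw [Finset.sum_mul]
      exact Finset.sum_congr rfl fun k _ => by ring
    rw [e1, e2, ← Finset.sum_div, ← Finset.sum_div]
    ring
  rw [Afun, hsum]
  field_simp
  ring

lemma rho_bound (n : ℕ) (hn3 : 3 ≤ n) (t : ℝ) (ht0 : 0 ≤ t) :
    t ^ (2 * n - 2) / (1 + t ^ (2 * n)) ^ 3 / (2 * t ^ 4) * t ^ (n + 2)
      ≤ 8 * (1 + t) ^ (-(3 : ℝ)) := by
  have hpos : (0:ℝ) < 1 + t := by linarith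
  have hR : (1 + t) ^ (-(3:ℝ)) = ((1 + t) ^ (3:ℕ))⁻¹ := by
    rw [← Real.rpow_natCast (1 + t) 3, ← Real.rpow_neg hpos.le]
    norm_num
  rw [hR]
  rcases eq_or_lt_of_le ht0 with ht | ht
  · rw [← ht]
    rw [zero_pow (by omega : 2 * n - 2 ≠ 0)]
    simp
  have hDpos : (0:ℝ) < 1 + t ^ (2 * n) := by positivity
  have key : t ^ (3 * n - 4) * (1 + t) ^ 3 ≤ 16 * (1 + t ^ (2 * n)) ^ 3 := by
    rcases le_total t 1 with h1 | h1
    · have ha : t ^ (3 * n - 4) ≤ 1 := pow_le_one₀ ht0 h1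
      have hb : (1 + t) ^ 3 ≤ 8 := by
        have h2 : 1 + t ≤ 2 := by linarith
        calc (1 + t) ^ 3 ≤ 2 ^ 3 := pow_le_pow_left₀ (by linarith) h2 3
          _ = 8 := by norm_num
      have hc : (1:ℝ) ≤ (1 + t ^ (2 * n)) ^ 3 := by
        have : (1:ℝ) ≤ 1 + t ^ (2 * n) := by linarith [pow_nonneg ht0 (2 * n)]
        calc (1:ℝ) = 1 ^ 3 := by norm_num
        _ ≤ (1 + t ^ (2 * n)) ^ 3 := pow_le_pow_left₀ (by norm_num) this 3
      nlinarith [mul_le_mul ha hb (by positivity) zero_le_one]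
    · have h3 : (1 + t) ^ 3 ≤ 8 * t ^ 3 := by
        have h2 : 1 + t ≤ 2 * t := by linarith
        calc (1 + t) ^ 3 ≤ (2 * t) ^ 3 := pow_le_pow_left₀ (by linarith) h2 3
          _ = 8 * t ^ 3 := by ring
      have h4 : t ^ (3 * n - 4) * (8 * t ^ 3) = 8 * t ^ (3 * n - 1) := by
        rw [mul_comm (t ^ (3 * n - 4)), mul_assoc, ← pow_add]
        congr 2
        omega
      have h5 : t ^ (3 * n - 1) ≤ t ^ (6 * n) := pow_le_pow_right₀ h1 (by omega)
      have h6 : t ^ (6 * n) = (t ^ (2 * n)) ^ 3 := by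
        rw [← pow_mul]
        congr 1
        omega
      have h7 : (t ^ (2 * n)) ^ 3 ≤ (1 + t ^ (2 * n)) ^ 3 :=
        pow_le_pow_left₀ (by positivity) (by linarith [pow_nonneg ht.le (2 * n)]) 3
      calc t ^ (3 * n - 4) * (1 + t) ^ 3
          ≤ t ^ (3 * n - 4) * (8 * t ^ 3) :=
            mul_le_mul_of_nonneg_left h3 (pow_nonneg ht.le _)
        _ = 8 * t ^ (3 * n - 1) := h4
        _ ≤ 8 * (t ^ (2 * n)) ^ 3 := by rw [← h6]; linarith
        _ ≤ 16 * (1 + t ^ (2 * n)) ^ 3 := by nlinarith [pow_nonneg ht.le (2 * n)]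
  have hsplit : t ^ (2 * n - 2) * t ^ (n + 2) = t ^ 4 * t ^ (3 * n - 4) := by
    rw [← pow_add, ← pow_add]
    congr 1
    omega
  rw [div_div, div_mul_eq_mul_div, ← div_eq_mul_inv (8:ℝ),
    div_le_div_iff₀ (by positivity) (by positivity), hsplit]
  nlinarith [mul_le_mul_of_nonneg_left key (pow_nonneg ht.le 4)]

lemma part_i_aux (n : ℕ) (hn3 : 3 ≤ n) (lam : ℝ) (hn : lam = n) (C : ℂ) :
    (∫ x : ℂ, ((‖x‖ ^ (2 * lam - 2) *
        (-((starRingEnd ℂ C * x ^ 2).re) / (2 * ‖x‖ ^ 4)) /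
        (1 + ‖x‖ ^ (2 * lam)) ^ 3 : ℝ) : ℂ) * x ^ n) = 0 := by
  have hcast1 : ((2 * n - 2 : ℕ) : ℝ) = 2 * lam - 2 := by
    rw [Nat.cast_sub (show 2 ≤ 2 * n by omega), hn]
    push_cast
    ring
  have hcast2 : ((2 * n : ℕ) : ℝ) = 2 * lam := by
    rw [hn]; push_cast; ring
  have e1 : ∀ t : ℝ, t ^ (2 * lam - 2) = t ^ (2 * n - 2 : ℕ) := fun t => by
    rw [← hcast1, Real.rpow_natCast]
  have e2 : ∀ t : ℝ, t ^ (2 * lam) = t ^ (2 * n : ℕ) := fun t => by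
    rw [← hcast2, Real.rpow_natCast]
  set ρ : ℂ → ℝ := fun x => ‖x‖ ^ (2 * n - 2 : ℕ) /
      (1 + ‖x‖ ^ (2 * n : ℕ)) ^ 3 / (2 * ‖x‖ ^ 4) with hρ
  set g1f : ℂ → ℂ := fun x => -((ρ x : ℝ) : ℂ) / 2 * (starRingEnd ℂ C * x ^ (n + 2)) with hg1
  set g2f : ℂ → ℂ := fun x => -((ρ x : ℝ) : ℂ) / 2 * (C * starRingEnd ℂ x ^ 2 * x ^ n)
    with hg2
  have hρ0 : ∀ x, 0 ≤ ρ x := by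
    intro x
    rw [hρ]
    positivity
  have hρrot : ∀ (ω x : ℂ), ‖ω‖ = 1 → ρ (ω * x) = ρ x := by
    intro ω x hω
    rw [hρ]
    simp only [norm_mul, hω, one_mul]
  have hrepr : ∀ x : ℂ, ((‖x‖ ^ (2 * lam - 2) *
        (-((starRingEnd ℂ C * x ^ 2).re) / (2 * ‖x‖ ^ 4)) /
        (1 + ‖x‖ ^ (2 * lam)) ^ 3 : ℝ) : ℂ) * x ^ n = g1f x + g2f x := by
    intro x
    have h1 : starRingEnd ℂ (starRingEnd ℂ C * x ^ 2) = C * starRingEnd ℂ x ^ 2 := by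
      rw [map_mul, Complex.conj_conj, map_pow]
    have hre : (((starRingEnd ℂ C * x ^ 2).re : ℝ) : ℂ)
        = (starRingEnd ℂ C * x ^ 2 + C * starRingEnd ℂ x ^ 2) / 2 := by
      have h2 := Complex.add_conj (starRingEnd ℂ C * x ^ 2)
      rw [h1] at h2
      push_cast at h2
      linear_combination - h2 / 2
    rw [e1 (‖x‖), e2 (‖x‖)]
    push_cast
    rw [hre]
    simp only [hg1, hg2, hρ]
    push_cast
    ring
  simp_rw [hrepr]
  have hmabs : Measurable fun x : ℂ => ‖x‖ := continuous_norm.measurable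
  have hmρ : Measurable ρ := by
    rw [hρ]
    exact ((hmabs.pow_const _).div
      ((measurable_const.add (hmabs.pow_const _)).pow_const 3)).div
      ((hmabs.pow_const 4).const_mul 2)
  have hmρc : Measurable fun x : ℂ => -((ρ x : ℝ) : ℂ) / 2 :=
    (Complex.measurable_ofReal.comp hmρ).neg.div_const 2
  have hm1 : AEStronglyMeasurable g1f volume :=
    (hmρc.mul ((measurable_id.pow_const (n + 2)).const_mul _)).aestronglyMeasurable
  have hm2 : AEStronglyMeasurable g2f volume :=
    (hmρc.mul ((((Complex.continuous_conj.measurable).pow_const 2).const_mul C).mul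
      (measurable_id.pow_const n))).aestronglyMeasurable
  have hintb : Integrable (fun x : ℂ => 4 * ‖C‖ * (1 + ‖x‖) ^ (-(3:ℝ))) :=
    (integrable_one_add_norm (E := ℂ)
      (by rw [Complex.finrank_real_complex]; norm_num)).const_mul _
  have hnval1 : ∀ x : ℂ, ‖g1f x‖ = ρ x / 2 * (‖C‖ * ‖x‖ ^ (n + 2)) := by
    intro x
    simp only [hg1]
    simp [norm_mul, norm_div, norm_pow, Complex.norm_real,
      abs_of_nonneg (hρ0 x)]
  have hnval2 : ∀ x : ℂ, ‖g2f x‖ = ρ x / 2 * (‖C‖ * ‖x‖ ^ (n + 2)) := by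
    intro x
    simp only [hg2]
    rw [norm_mul, norm_div, norm_neg, Complex.norm_real, Real.norm_eq_abs,
      abs_of_nonneg (hρ0 x), Complex.norm_two, norm_mul, norm_mul, norm_pow, norm_pow,
      Complex.norm_conj, show n + 2 = 2 + n by omega, pow_add]
    ring
  have hbnd : ∀ x : ℂ, ρ x / 2 * (‖C‖ * ‖x‖ ^ (n + 2))
      ≤ 4 * ‖C‖ * (1 + ‖x‖) ^ (-(3:ℝ)) := by
    intro x
    have h := rho_bound n hn3 (‖x‖) (norm_nonneg x)
    have h' : ρ x * ‖x‖ ^ (n + 2) ≤ 8 * (1 + ‖x‖) ^ (-(3:ℝ)) := by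
      rw [hρ]
      exact h
    nlinarith [mul_le_mul_of_nonneg_left h'
      (show (0:ℝ) ≤ ‖C‖ / 2 from by positivity)]
  have hi1 : Integrable g1f :=
    hintb.mono' hm1 (ae_of_all _ fun x => (hnval1 x).le.trans (hbnd x))
  have hi2 : Integrable g2f :=
    hintb.mono' hm2 (ae_of_all _ fun x => (hnval2 x).le.trans (hbnd x))
  rw [integral_add hi1 hi2]
  have hz1 : (∫ x : ℂ, g1f x) = 0 := by
    obtain ⟨ω, hω, hωn⟩ := exists_root (n + 2) (by omega)
    apply rot_zero ω (-1) hω (by norm_num)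
    intro z
    simp only [hg1]
    rw [hρrot ω z hω, mul_pow, hωn]
    ring
  have hz2 : (∫ x : ℂ, g2f x) = 0 := by
    obtain ⟨ω, hω, hωm⟩ := exists_root (n - 2) (by omega)
    have hmc : starRingEnd ℂ ω * ω = 1 := by
      rw [mul_comm, Complex.mul_conj, Complex.normSq_eq_norm_sq, hω]
      norm_num
    have hkey : starRingEnd ℂ ω ^ 2 * ω ^ n = -1 := by
      have hsplit : ω ^ n = ω ^ (n - 2) * ω ^ 2 := by
        rw [← pow_add]
        congr 1
        omega
      calc starRingEnd ℂ ω ^ 2 * ω ^ n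
          = (starRingEnd ℂ ω * ω) ^ 2 * ω ^ (n - 2) := by rw [hsplit]; ring
        _ = ω ^ (n - 2) := by rw [hmc]; ring
        _ = -1 := hωm
    apply rot_zero ω (-1) hω (by norm_num)
    intro z
    simp only [hg2]
    rw [hρrot ω z hω, map_mul, mul_pow, mul_pow]
    linear_combination (-((ρ z : ℝ) : ℂ) / 2 * (C * starRingEnd ℂ z ^ 2 * z ^ n)) * hkey
  rw [hz1, hz2, add_zero]

theorem vanishing_integrals
    (b : ℝ) (hb : b = 1 ∨ b = 2 ∨ b = 3) (N₁ N₂ : ℕ)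
    (p : Fin N₁ → ℂ) (q : Fin N₂ → ℂ)
    (lam : ℝ) (hnat : lamNat lam) (h3 : 3 ≤ lam) :
    (∫ x : ℂ, ((‖x‖ ^ (2 * lam - 2) * Afun p q b x /
        (1 + ‖x‖ ^ (2 * lam)) ^ 3 : ℝ) : ℂ) * zlam lam x) = 0 ∧
    (∫ x : ℂ, ((‖x‖ ^ (4 * lam - 4) /
        (1 + ‖x‖ ^ (2 * lam)) ^ 5 : ℝ) : ℂ) * zlam lam x) = 0 ∧
    (∫ x : ℂ, ‖x‖ ^ (2 * lam - 2) * (1 - 2 * ‖x‖ ^ (2 * lam)) *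
        Afun p q b x / (1 + ‖x‖ ^ (2 * lam)) ^ 4) = 0 := by
  obtain ⟨n, hn⟩ := hnat
  have hn3 : 3 ≤ n := by exact_mod_cast hn ▸ h3
  have hzlam : ∀ w : ℂ, zlam lam w = w ^ n := by
    intro w
    rw [zlam, hn, Complex.ofReal_natCast, Complex.cpow_natCast]
  refine ⟨?_, ?_, ?_⟩
  · -- part (i)
    simp_rw [hzlam, afun_decomp p q b]
    exact part_i_aux n hn3 lam hn _
  · -- part (ii)
    obtain ⟨ω, hω, hωn⟩ := exists_root n (by omega)
    apply rot_zero ω (-1) hω (by norm_num)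
    intro z
    have habs : ‖(ω * z)‖ = ‖z‖ := by rw [norm_mul, hω, one_mul]
    rw [habs, hzlam, hzlam, mul_pow, hωn]
    ring
  · -- part (iii)
    apply rot_neg_zero Complex.I (by simp)
    intro z
    have habs : ‖(Complex.I * z)‖ = ‖z‖ := by
      rw [norm_mul, Complex.norm_I, one_mul]
    have hA : Afun p q b (Complex.I * z) = - Afun p q b z := by
      rw [afun_decomp, afun_decomp, habs]
      have hsq : starRingEnd ℂ ((∑ j, (b:ℂ) * p j ^ 2) + ∑ k, 2 * q k ^ 2) *
          (Complex.I * z) ^ 2 =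
          -(starRingEnd ℂ ((∑ j, (b:ℂ) * p j ^ 2) + ∑ k, 2 * q k ^ 2) * z ^ 2) := by
        rw [mul_pow, Complex.I_sq]
        ring
      rw [hsq, Complex.neg_re]
      ring
    rw [habs, hA]
    ring


end

end CSpaper
end

section
/- For every real λ ≥ 1, ∫_{ℝ²} |x|^{4λ−4}(1 − 4|x|^{2λ}) / (1+|x|^{2λ})^6 dx = −((λ−1)π/λ) ∫₀^∞ t^{2λ−2}/(1+t^λ)^5 dt. -/
namespace CSpaper

open MeasureTheory Filter

noncomputable section

section AuxRadial
open Set Real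

lemma aux_hasDerivAt {lam : ℝ} (hl : 0 < lam) {r : ℝ} (hr : 0 < r) :
    HasDerivAt (fun s : ℝ => s ^ (4*lam-2) / (2*lam*(1+s^(2*lam))^5))
      (r ^ (4*lam-3) * (1 - 4*r^(2*lam)) / (1 + r^(2*lam))^6
        + (lam-1)/lam * (r ^ (4*lam-3) / (1 + r^(2*lam))^5)) r := by
  have hw : (0:ℝ) < 1 + r^(2*lam) := by positivity
  have hnum : HasDerivAt (fun s : ℝ => s ^ (4*lam-2)) ((4*lam-2) * r ^ (4*lam-3)) r := by
    have h := Real.hasDerivAt_rpow_const (x := r) (p := 4*lam-2) (Or.inl hr.ne')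
    rwa [show 4*lam-2-1 = 4*lam-3 by ring] at h
  have hin : HasDerivAt (fun s : ℝ => 1 + s^(2*lam)) (2*lam * r^(2*lam-1)) r :=
    (Real.hasDerivAt_rpow_const (x := r) (p := 2*lam) (Or.inl hr.ne')).const_add 1
  have hden := (hin.pow 5).const_mul (2*lam)
  have hF : HasDerivAt (fun s : ℝ => s ^ (4*lam-2) / (2*lam*(1+s^(2*lam))^5)) _ r :=
    hnum.div hden (by show 2*lam*(1+r^(2*lam))^5 ≠ 0; positivity)
  convert hF using 1
  have h1 : r ^ (4*lam-3) * r = r ^ (4*lam-2) := by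
    rw [← Real.rpow_add_one hr.ne']; congr 1; ring
  have h2 : r ^ (2*lam-1) * r = r ^ (2*lam) := by
    rw [← Real.rpow_add_one hr.ne']; congr 1; ring
  rw [← h2] at hw
  rw [← h1, ← h2]
  field_simp
  ring


lemma aux_contG2 {lam : ℝ} :
    ContinuousOn (fun r : ℝ => r ^ (4*lam-3) / (1+r^(2*lam))^5) (Ioi 0) := by
  apply ContinuousOn.div
  · exact continuousOn_id.rpow_const fun x hx => Or.inl (ne_of_gt hx)
  · exact (continuousOn_const.add (continuousOn_id.rpow_const fun x hx => Or.inl (ne_of_gt hx))).pow 5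
  · intro x hx
    exact ne_of_gt (pow_pos (by linarith [Real.rpow_nonneg (le_of_lt hx) (2*lam)]) 5)

lemma aux_intG2 {lam : ℝ} (hlam : 1 ≤ lam) :
    IntegrableOn (fun r : ℝ => r ^ (4*lam-3) / (1+r^(2*lam))^5) (Ioi 0) := by
  have hl : (0:ℝ) < lam := lt_of_lt_of_le one_pos hlam
  rw [← Ioc_union_Ioi_eq_Ioi (zero_le_one)]
  apply IntegrableOn.union
  · rw [integrableOn_Ioc_iff_integrableOn_Ioo]
    have hg : IntegrableOn (fun x : ℝ => x ^ (4*lam-3)) (Ioo (0:ℝ) 1) := by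
      rw [intervalIntegral.integrableOn_Ioo_rpow_iff one_pos]; linarith
    refine Integrable.mono hg
      ((aux_contG2.mono Ioo_subset_Ioi_self).aestronglyMeasurable measurableSet_Ioo) ?_
    filter_upwards [ae_restrict_mem measurableSet_Ioo] with x hx
    have hx0 : (0:ℝ) < x := hx.1
    have hxn : (0:ℝ) ≤ x ^ (4*lam-3) := Real.rpow_nonneg hx0.le _
    have hw0 : (0:ℝ) ≤ x ^ (2*lam) := Real.rpow_nonneg hx0.le _
    have hd0 : (0:ℝ) < (1+x^(2*lam))^5 := pow_pos (by linarith) 5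
    have hd1 : (1:ℝ) ≤ (1+x^(2*lam))^5 := one_le_pow₀ (by linarith)
    rw [Real.norm_eq_abs, Real.norm_eq_abs, abs_of_nonneg (div_nonneg hxn hd0.le),
      abs_of_nonneg hxn]
    calc x ^ (4*lam-3) / (1+x^(2*lam))^5 ≤ x ^ (4*lam-3) / 1 :=
          div_le_div_of_nonneg_left hxn one_pos hd1
      _ = x ^ (4*lam-3) := div_one _
  · have hg : IntegrableOn (fun x : ℝ => x ^ (4*lam-3-10*lam)) (Ioi (1:ℝ)) :=
      integrableOn_Ioi_rpow_of_lt (by linarith) one_pos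
    refine Integrable.mono hg ((aux_contG2.mono (Ioi_subset_Ioi zero_le_one)).aestronglyMeasurable
      measurableSet_Ioi) ?_
    filter_upwards [ae_restrict_mem measurableSet_Ioi] with x hx
    have hx1 : (1:ℝ) < x := hx
    have hx0 : (0:ℝ) < x := lt_trans one_pos hx1
    have hxn : (0:ℝ) ≤ x ^ (4*lam-3) := Real.rpow_nonneg hx0.le _
    have hw0 : (0:ℝ) ≤ x ^ (2*lam) := Real.rpow_nonneg hx0.le _
    have hd0 : (0:ℝ) < (1+x^(2*lam))^5 := pow_pos (by linarith) 5
    rw [Real.norm_eq_abs, Real.norm_eq_abs, abs_of_nonneg (div_nonneg hxn hd0.le),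
      abs_of_nonneg (Real.rpow_nonneg hx0.le _)]
    have hpow : x ^ (10*lam) ≤ (1+x^(2*lam))^5 := by
      have h5 : x ^ (10*lam) = (x^(2*lam))^5 := by
        rw [← Real.rpow_natCast (x ^ (2*lam)) 5, ← Real.rpow_mul hx0.le]
        congr 1; ring
      rw [h5]
      exact pow_le_pow_left₀ hw0 (by linarith) 5
    calc x ^ (4*lam-3) / (1+x^(2*lam))^5 ≤ x ^ (4*lam-3) / x ^ (10*lam) :=
          div_le_div_of_nonneg_left hxn (Real.rpow_pos_of_pos hx0 _) hpow
      _ = x ^ (4*lam-3-10*lam) := by rw [← Real.rpow_sub hx0]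

lemma aux_contG1 {lam : ℝ} :
    ContinuousOn (fun r : ℝ => r ^ (4*lam-3) * (1 - 4*r^(2*lam)) / (1+r^(2*lam))^6) (Ioi 0) := by
  apply ContinuousOn.div
  · exact (continuousOn_id.rpow_const fun x hx => Or.inl (ne_of_gt hx)).mul
      (continuousOn_const.sub (continuousOn_const.mul
        (continuousOn_id.rpow_const fun x hx => Or.inl (ne_of_gt hx))))
  · exact (continuousOn_const.add (continuousOn_id.rpow_const fun x hx => Or.inl (ne_of_gt hx))).pow 6
  · intro x hx
    exact ne_of_gt (pow_pos (by linarith [Real.rpow_nonneg (le_of_lt hx) (2*lam)]) 6)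

lemma aux_intG1 {lam : ℝ} (hlam : 1 ≤ lam) :
    IntegrableOn (fun r : ℝ => r ^ (4*lam-3) * (1 - 4*r^(2*lam)) / (1+r^(2*lam))^6) (Ioi 0) := by
  refine Integrable.mono ((aux_intG2 hlam).const_mul 4)
    (aux_contG1.aestronglyMeasurable measurableSet_Ioi) ?_
  filter_upwards [ae_restrict_mem measurableSet_Ioi] with x hx
  have hx0 : (0:ℝ) < x := hx
  have hxn : (0:ℝ) ≤ x ^ (4*lam-3) := Real.rpow_nonneg hx0.le _
  have hw0 : (0:ℝ) ≤ x ^ (2*lam) := Real.rpow_nonneg hx0.le _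
  have hd0 : (0:ℝ) < 1 + x ^ (2*lam) := by linarith
  rw [Real.norm_eq_abs, Real.norm_eq_abs, abs_div, abs_mul, abs_of_nonneg hxn,
    abs_of_nonneg (pow_pos hd0 6).le,
    abs_of_nonneg (by positivity : (0:ℝ) ≤ 4 * (x ^ (4*lam-3) / (1+x^(2*lam))^5))]
  have habs : |1 - 4*x^(2*lam)| ≤ 4*(1 + x^(2*lam)) := abs_le.2 ⟨by linarith, by linarith⟩
  calc x ^ (4*lam-3) * |1 - 4*x^(2*lam)| / (1+x^(2*lam))^6
      ≤ x ^ (4*lam-3) * (4*(1+x^(2*lam))) / (1+x^(2*lam))^6 := by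
        apply div_le_div_of_nonneg_right (mul_le_mul_of_nonneg_left habs hxn) (pow_pos hd0 6).le
    _ = 4 * (x ^ (4*lam-3) / (1+x^(2*lam))^5) := by
        field_simp

lemma aux_key {lam : ℝ} (hlam : 1 ≤ lam) :
    ∫ r in Ioi (0:ℝ), (r ^ (4*lam-3) * (1 - 4*r^(2*lam)) / (1 + r^(2*lam))^6
        + (lam-1)/lam * (r ^ (4*lam-3) / (1 + r^(2*lam))^5)) = 0 := by
  have hl : (0:ℝ) < lam := lt_of_lt_of_le one_pos hlam
  have hint : IntegrableOn (fun r : ℝ => r ^ (4*lam-3) * (1 - 4*r^(2*lam)) / (1 + r^(2*lam))^6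
      + (lam-1)/lam * (r ^ (4*lam-3) / (1 + r^(2*lam))^5)) (Ioi 0) :=
    (aux_intG1 hlam).add ((aux_intG2 hlam).const_mul _)
  have hcont : ContinuousWithinAt (fun s : ℝ => s ^ (4*lam-2) / (2*lam*(1+s^(2*lam))^5))
      (Ici 0) 0 := by
    apply ContinuousAt.continuousWithinAt
    apply ContinuousAt.div
    · exact Real.continuousAt_rpow_const 0 _ (Or.inr (by linarith))
    · exact continuousAt_const.mul ((continuousAt_const.add
        (Real.continuousAt_rpow_const 0 _ (Or.inr (by linarith)))).pow 5)
    · rw [Real.zero_rpow (ne_of_gt (show (0:ℝ) < 2*lam by linarith))]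
      norm_num
      positivity
  have htend : Tendsto (fun s : ℝ => s ^ (4*lam-2) / (2*lam*(1+s^(2*lam))^5)) atTop (nhds 0) := by
    have hb : Tendsto (fun s : ℝ => (1/(2*lam)) * s ^ (4*lam-2-10*lam)) atTop (nhds 0) := by
      have h0 : Tendsto (fun s : ℝ => s ^ (-(10*lam-(4*lam-2)))) atTop (nhds 0) :=
        tendsto_rpow_neg_atTop (by linarith)
      have := h0.const_mul (1/(2*lam))
      rw [mul_zero] at this
      refine this.congr fun s => ?_
      congr 1
      ring_nf
    refine tendsto_of_tendsto_of_tendsto_of_le_of_le' tendsto_const_nhds hb ?_ ?_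
    · filter_upwards [eventually_gt_atTop (0:ℝ)] with s hs
      have hw0 : (0:ℝ) ≤ s ^ (2*lam) := Real.rpow_nonneg hs.le _
      have := Real.rpow_nonneg hs.le (4*lam-2)
      positivity
    · filter_upwards [eventually_gt_atTop (1:ℝ)] with s hs
      have hs0 : (0:ℝ) < s := lt_trans one_pos hs
      have hw0 : (0:ℝ) ≤ s ^ (2*lam) := Real.rpow_nonneg hs0.le _
      have hpow : s ^ (10*lam) ≤ (1+s^(2*lam))^5 := by
        have h5 : s ^ (10*lam) = (s^(2*lam))^5 := by
          rw [← Real.rpow_natCast (s ^ (2*lam)) 5, ← Real.rpow_mul hs0.le]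
          congr 1; ring
        rw [h5]
        exact pow_le_pow_left₀ hw0 (by linarith) 5
      have hnn : (0:ℝ) ≤ s ^ (4*lam-2) := Real.rpow_nonneg hs0.le _
      calc s ^ (4*lam-2) / (2*lam*(1+s^(2*lam))^5)
          ≤ s ^ (4*lam-2) / (2*lam*s^(10*lam)) := by
            apply div_le_div_of_nonneg_left hnn
            · positivity
            · exact mul_le_mul_of_nonneg_left hpow (by linarith)
        _ = (1/(2*lam)) * s ^ (4*lam-2-10*lam) := by
            conv_rhs => rw [Real.rpow_sub hs0]
            rw [div_mul_div_comm, one_mul]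
  have hderiv : ∀ r ∈ Ioi (0:ℝ), HasDerivAt (fun s : ℝ => s ^ (4*lam-2) / (2*lam*(1+s^(2*lam))^5))
      (r ^ (4*lam-3) * (1 - 4*r^(2*lam)) / (1 + r^(2*lam))^6
        + (lam-1)/lam * (r ^ (4*lam-3) / (1 + r^(2*lam))^5)) r :=
    fun r hr => aux_hasDerivAt hl hr
  have := integral_Ioi_of_hasDerivAt_of_tendsto hcont hderiv hint htend
  rw [this, Real.zero_rpow (ne_of_gt (show (0:ℝ) < 4*lam-2 by linarith))]
  simp


end AuxRadial

open Set Real in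
theorem radial_integral_identity (lam : ℝ) (hlam : 1 ≤ lam) :
    (∫ x : ℂ, ‖x‖ ^ (4 * lam - 4) * (1 - 4 * ‖x‖ ^ (2 * lam)) /
        (1 + ‖x‖ ^ (2 * lam)) ^ 6) =
      -((lam - 1) * Real.pi / lam) *
        ∫ t in Set.Ioi (0 : ℝ), t ^ (2 * lam - 2) / (1 + t ^ lam) ^ 5 := by
  have hl : (0:ℝ) < lam := lt_of_lt_of_le one_pos hlam
  have h2d : (∫ x : ℂ, ‖x‖ ^ (4 * lam - 4) * (1 - 4 * ‖x‖ ^ (2 * lam)) /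
        (1 + ‖x‖ ^ (2 * lam)) ^ 6)
      = 2 * Real.pi * ∫ r in Ioi (0:ℝ),
          r ^ (4*lam-3) * (1 - 4*r^(2*lam)) / (1 + r^(2*lam))^6 := by
    have h := MeasureTheory.integral_fun_norm_addHaar (volume : Measure ℂ)
      (fun t : ℝ => t ^ (4*lam-4) * (1 - 4*t^(2*lam)) / (1 + t^(2*lam))^6)
    rw [h, Complex.finrank_real_complex]
    have hball : volume.real (Metric.ball (0:ℂ) 1) = Real.pi := by
      simp [Measure.real, Complex.volume_ball]
    rw [hball]
    simp only [nsmul_eq_mul, smul_eq_mul, pow_one, Nat.cast_ofNat]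
    rw [← mul_assoc]
    congr 1
    apply setIntegral_congr_fun measurableSet_Ioi
    intro y hy
    have hy0 : (0:ℝ) < y := hy
    have e4 : y * y ^ (4*lam-4) = y ^ (4*lam-3) := by
      rw [show (4*lam-3:ℝ) = (4*lam-4)+1 by ring, Real.rpow_add_one hy0.ne']; ring
    dsimp only
    rw [← e4]; ring
  have hrhs : (∫ t in Ioi (0:ℝ), t ^ (2*lam-2) / (1+t^lam)^5)
      = 2 * ∫ r in Ioi (0:ℝ), r ^ (4*lam-3) / (1+r^(2*lam))^5 := by
    rw [← integral_comp_rpow_Ioi_of_pos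
      (g := fun t : ℝ => t ^ (2*lam-2) / (1+t^lam)^5) (p := 2) two_pos,
      ← MeasureTheory.integral_const_mul]
    apply setIntegral_congr_fun measurableSet_Ioi
    intro x hx
    have hx0 : (0:ℝ) < x := hx
    simp only [smul_eq_mul]
    have e1 : (x:ℝ) ^ ((2:ℝ)-1) = x := by norm_num
    have e2 : (x ^ (2:ℝ)) ^ (2*lam-2) = x ^ (4*lam-4) := by
      rw [← Real.rpow_mul hx0.le]; congr 1; ring
    have e3 : (x ^ (2:ℝ)) ^ lam = x ^ (2*lam) := by
      rw [← Real.rpow_mul hx0.le]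
    have e4 : x * x ^ (4*lam-4) = x ^ (4*lam-3) := by
      rw [show (4*lam-3:ℝ) = (4*lam-4)+1 by ring, Real.rpow_add_one hx0.ne']; ring
    rw [e1, e2, e3, ← e4]
    ring
  have hkey := aux_key hlam
  rw [MeasureTheory.integral_add (aux_intG1 hlam) ((aux_intG2 hlam).const_mul _),
    MeasureTheory.integral_const_mul] at hkey
  rw [h2d, hrhs]
  linear_combination (2*Real.pi) * hkey


end

end CSpaper
end

section
/- Suppose λ ∈ ℕ. Then the Gram coefficients a_{jk}(α) = ∫_{ℝ²} σ^{−2−2d} Z_{α,j} Z_{α,k} dx (j,k = 1,2) satisfy a_{12}(0) = a_{21}(0) = 0 and a_{11}(0) = a_{22}(0) = π ∫₀^∞ r^{2λ+1} / ((1+r^{2λ})² (1+r)^{2+2d}) dr > 0; consequently there exists ε₀ > 0 such that a_{11}(α) a_{22}(α) − a_{12}(α) a_{21}(α) > 0 whenever |α| < ε₀. -/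
namespace CSpaper

open MeasureTheory Filter

noncomputable section

section GramAux

open Real Set Complex

/-- Helper function: `g(z^n+α)/(1+|z^n+α|²)` for `g = re` or `g = im`. -/
noncomputable def FFaux (g : ℂ → ℝ) (n : ℕ) (α z : ℂ) : ℝ :=
  g (z ^ n + α) / (1 + ‖z ^ n + α‖ ^ 2)

lemma absFF_le {g : ℂ → ℝ} (hg : ∀ w, |g w| ≤ ‖w‖) (n : ℕ) (α z : ℂ) :
    |FFaux g n α z| ≤ 1 := by
  set w := z ^ n + α
  have h0 : (0:ℝ) < 1 + ‖w‖ ^ 2 := by positivity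
  rw [FFaux, abs_div, abs_of_pos h0, div_le_one h0]
  nlinarith [norm_nonneg w, hg w, abs_nonneg (g w)]

lemma sig_nonneg (x : ℂ) : 0 ≤ sig x := by
  have := norm_nonneg x
  simp only [sig]; linarith

lemma continuous_sig : Continuous sig :=
  continuous_const.add continuous_norm

lemma sig_integrable {d : ℝ} (hd : 0 < d) :
    Integrable (fun x : ℂ => sig x ^ (-(2 + 2 * d))) := by
  have h : (fun x : ℂ => sig x ^ (-(2 + 2 * d))) = fun x : ℂ => (1 + ‖x‖) ^ (-(2 + 2 * d)) := by
    funext x; simp [sig]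
  rw [h]
  apply integrable_one_add_norm (E := ℂ)
  rw [Complex.finrank_real_complex]
  norm_num; linarith

lemma contFF {g : ℂ → ℝ} (hg : Continuous g) (n : ℕ) :
    Continuous (fun p : ℂ × ℂ => FFaux g n p.1 p.2) := by
  have hc : Continuous (fun p : ℂ × ℂ => p.2 ^ n + p.1) :=
    (continuous_snd.pow n).add continuous_fst
  apply Continuous.div (hg.comp hc)
  · exact continuous_const.add ((continuous_norm.comp hc).pow 2)
  · intro p; positivity

lemma Z1_eq {lam : ℝ} {n : ℕ} (hn : lam = n) : Z1 lam = FFaux Complex.re n := by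
  funext α z
  simp only [Z1, FFaux, zlam, hn]
  push_cast
  rw [Complex.cpow_natCast]

lemma Z2_eq {lam : ℝ} {n : ℕ} (hn : lam = n) : Z2 lam = FFaux Complex.im n := by
  funext α z
  simp only [Z2, FFaux, zlam, hn]
  push_cast
  rw [Complex.cpow_natCast]

lemma integrable_ZZ {d : ℝ} (hd : 0 < d) {g₁ g₂ : ℂ → ℝ}
    (hc₁ : Continuous g₁) (hc₂ : Continuous g₂)
    (hb₁ : ∀ w, |g₁ w| ≤ ‖w‖) (hb₂ : ∀ w, |g₂ w| ≤ ‖w‖)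
    (n : ℕ) (α : ℂ) :
    Integrable (fun z : ℂ => sig z ^ (-(2 + 2 * d)) * FFaux g₁ n α z * FFaux g₂ n α z) := by
  apply (sig_integrable hd).mono'
  · exact (((continuous_sig.rpow_const (fun x => Or.inl (by
      have := norm_nonneg x; simp only [sig]; positivity))).mul
      ((contFF hc₁ n).comp (Continuous.prodMk_right α))).mul
      ((contFF hc₂ n).comp (Continuous.prodMk_right α))).aestronglyMeasurable
  · apply ae_of_all
    intro z
    have h0 : (0:ℝ) ≤ sig z ^ (-(2 + 2 * d)) := Real.rpow_nonneg (sig_nonneg z) _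
    have h1 := absFF_le hb₁ n α z
    have h2 := absFF_le hb₂ n α z
    rw [Real.norm_eq_abs, abs_mul, abs_mul, _root_.abs_of_nonneg h0]
    calc sig z ^ (-(2 + 2 * d)) * |FFaux g₁ n α z| * |FFaux g₂ n α z|
        = sig z ^ (-(2 + 2 * d)) * (|FFaux g₁ n α z| * |FFaux g₂ n α z|) := by ring
      _ ≤ sig z ^ (-(2 + 2 * d)) * 1 := by
          apply mul_le_mul_of_nonneg_left _ h0
          calc |FFaux g₁ n α z| * |FFaux g₂ n α z| ≤ 1 * 1 :=
                mul_le_mul h1 h2 (abs_nonneg _) zero_le_one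
            _ = 1 := one_mul 1
      _ = sig z ^ (-(2 + 2 * d)) := mul_one _

lemma theta_integral (n : ℕ) (hn : 1 ≤ n) :
    (∫ θ in Ioo (-π) π, Real.cos ((n:ℝ) * θ) ^ 2) = π := by
  have hne : ((n:ℝ)) ≠ 0 := by positivity
  rw [← MeasureTheory.integral_Ioc_eq_integral_Ioo,
    ← intervalIntegral.integral_of_le (by linarith [Real.pi_pos] : -π ≤ π),
    intervalIntegral.integral_comp_mul_left (fun x => Real.cos x ^ 2) hne,
    integral_cos_sq]
  have hs : Real.sin ((n:ℝ) * π) = 0 := Real.sin_nat_mul_pi n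
  rw [mul_neg, Real.sin_neg, hs]
  simp only [smul_eq_mul, mul_zero, zero_mul, neg_zero, sub_zero, zero_add, sub_neg_eq_add,
    one_div]
  rw [← two_mul, mul_div_cancel_left₀ _ two_ne_zero, inv_mul_cancel_left₀ hne]

lemma polar_diag (n : ℕ) (hn : 1 ≤ n) (d : ℝ) :
    (∫ z : ℂ, sig z ^ (-(2 + 2 * d)) * ((z ^ n).re / (1 + ‖z ^ n‖ ^ 2)) *
        ((z ^ n).re / (1 + ‖z ^ n‖ ^ 2))) =
      Real.pi * ∫ r in Ioi (0:ℝ),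
        r ^ (2 * (n:ℝ) + 1) / ((1 + r ^ (2 * (n:ℝ))) ^ 2 * (1 + r) ^ (2 + 2 * d)) := by
  rw [← Complex.integral_comp_polarCoord_symm]
  rw [show polarCoord.target = Ioi (0:ℝ) ×ˢ Ioo (-π) π from rfl]
  have hkey : ∀ p ∈ Ioi (0:ℝ) ×ˢ Ioo (-π) π,
      p.1 • (sig (Complex.polarCoord.symm p) ^ (-(2 + 2 * d)) *
        (((Complex.polarCoord.symm p) ^ n).re /
          (1 + ‖(Complex.polarCoord.symm p) ^ n‖ ^ 2)) *
        (((Complex.polarCoord.symm p) ^ n).re /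
          (1 + ‖(Complex.polarCoord.symm p) ^ n‖ ^ 2))) =
      (p.1 ^ (2 * (n:ℝ) + 1) / ((1 + p.1 ^ (2 * (n:ℝ))) ^ 2 * (1 + p.1) ^ (2 + 2 * d))) *
        Real.cos ((n:ℝ) * p.2) ^ 2 := by
    rintro ⟨r, θ⟩ ⟨hr, -⟩
    simp only [Set.mem_Ioi] at hr
    have habs : ‖Complex.polarCoord.symm (r, θ)‖ = r := by
      rw [Complex.norm_polarCoord_symm, abs_of_pos hr]
    have hz : Complex.polarCoord.symm (r, θ) = (r:ℂ) * Complex.exp (θ * Complex.I) := by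
      rw [Complex.polarCoord_symm_apply, Complex.exp_mul_I]
      push_cast
      rfl
    have hzn : (Complex.polarCoord.symm (r, θ)) ^ n =
        ((r ^ n : ℝ) : ℂ) * Complex.exp (((n:ℝ) * θ : ℝ) * Complex.I) := by
      rw [hz, mul_pow, ← Complex.exp_nat_mul]
      push_cast
      ring_nf
    have hre : ((Complex.polarCoord.symm (r, θ)) ^ n).re = r ^ n * Real.cos ((n:ℝ) * θ) := by
      rw [hzn, Complex.re_ofReal_mul, Complex.exp_ofReal_mul_I_re]
    have habsn : ‖(Complex.polarCoord.symm (r, θ)) ^ n‖ = r ^ n := by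
      rw [norm_pow, habs]
    have hsig : sig (Complex.polarCoord.symm (r, θ)) = 1 + r := by
      rw [sig, habs]
    simp only [hre, habsn, hsig, smul_eq_mul]
    have e1 : r ^ (2 * (n:ℝ) + 1) = r ^ (2 * n + 1) := by
      rw [show (2 * (n:ℝ) + 1) = ((2 * n + 1 : ℕ) : ℝ) by push_cast; ring, Real.rpow_natCast]
    have e2 : r ^ (2 * (n:ℝ)) = r ^ (2 * n) := by
      rw [show (2 * (n:ℝ)) = ((2 * n : ℕ) : ℝ) by push_cast; ring, Real.rpow_natCast]
    have e3 : (1 + r) ^ (-(2 + 2 * d)) = ((1 + r) ^ (2 + 2 * d))⁻¹ :=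
      Real.rpow_neg (by linarith) _
    have h4 : (0:ℝ) < 1 + r ^ n * (r ^ n * 1) := by positivity
    have h5 : (0:ℝ) < (1 + r) ^ (2 + 2 * d) := Real.rpow_pos_of_pos (by linarith) _
    rw [e1, e2, e3]
    have h6 : (0:ℝ) < 1 + (r ^ n) ^ 2 := by positivity
    field_simp
    ring
  rw [MeasureTheory.setIntegral_congr_fun (measurableSet_Ioi.prod measurableSet_Ioo) hkey]
  rw [MeasureTheory.Measure.volume_eq_prod, ← MeasureTheory.Measure.prod_restrict,
    MeasureTheory.integral_prod_mul
      (f := fun r : ℝ => r ^ (2 * (n:ℝ) + 1) / ((1 + r ^ (2 * (n:ℝ))) ^ 2 * (1 + r) ^ (2 + 2 * d)))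
      (g := fun θ : ℝ => Real.cos ((n:ℝ) * θ) ^ 2)]
  rw [theta_integral n hn]
  ring

lemma rot_diag (n : ℕ) (hn : 1 ≤ n) (d : ℝ) :
    (∫ z : ℂ, sig z ^ (-(2 + 2 * d)) * ((z ^ n).im / (1 + ‖z ^ n‖ ^ 2)) *
        ((z ^ n).im / (1 + ‖z ^ n‖ ^ 2))) =
      ∫ z : ℂ, sig z ^ (-(2 + 2 * d)) * ((z ^ n).re / (1 + ‖z ^ n‖ ^ 2)) *
        ((z ^ n).re / (1 + ‖z ^ n‖ ^ 2)) := by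
  set c : Circle := Circle.exp (π / (2 * n)) with hc
  have hne : ((n:ℝ)) ≠ 0 := by positivity
  have hnc : ((n:ℂ)) ≠ 0 := Nat.cast_ne_zero.2 (by omega)
  have hcn : ((c : ℂ)) ^ n = Complex.I := by
    rw [hc, Circle.coe_exp, ← Complex.exp_nat_mul]
    have : ((n : ℂ)) * (((π / (2 * n) : ℝ) : ℂ) * Complex.I) = ((π / 2 : ℝ) : ℂ) * Complex.I := by
      push_cast
      field_simp
    rw [this, Complex.exp_mul_I]
    push_cast [← Complex.ofReal_cos, ← Complex.ofReal_sin]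
    simp [Real.cos_pi_div_two, Real.sin_pi_div_two]
  have := ((rotation c).measurePreserving.integral_comp
    (rotation c).toHomeomorph.measurableEmbedding
    (fun z : ℂ => sig z ^ (-(2 + 2 * d)) * ((z ^ n).re / (1 + ‖z ^ n‖ ^ 2)) *
        ((z ^ n).re / (1 + ‖z ^ n‖ ^ 2))))
  rw [← this]
  apply MeasureTheory.integral_congr_ae
  apply ae_of_all
  intro z
  have h1 : (rotation c z) = (c : ℂ) * z := rotation_apply c z
  have h2 : ((rotation c z) ^ n) = Complex.I * z ^ n := by rw [h1, mul_pow, hcn]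
  have h4 : sig (rotation c z) = sig z := by
    rw [sig, sig, h1, norm_mul, Circle.norm_coe, one_mul]
  simp only [h2, h4, norm_mul, Complex.norm_I, Complex.I_mul_re, one_mul, mul_one]
  ring

lemma conj_zero (n : ℕ) (d : ℝ) :
    (∫ z : ℂ, sig z ^ (-(2 + 2 * d)) * ((z ^ n).re / (1 + ‖z ^ n‖ ^ 2)) *
        ((z ^ n).im / (1 + ‖z ^ n‖ ^ 2))) = 0 := by
  set f : ℂ → ℝ := fun z => sig z ^ (-(2 + 2 * d)) * ((z ^ n).re / (1 + ‖z ^ n‖ ^ 2)) *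
        ((z ^ n).im / (1 + ‖z ^ n‖ ^ 2)) with hf
  have h1 := Complex.conjLIE.measurePreserving.integral_comp
    Complex.conjLIE.toHomeomorph.measurableEmbedding f
  have h2 : ∀ z : ℂ, f (Complex.conjLIE z) = - f z := by
    intro z
    have hz : (Complex.conjLIE z : ℂ) = (starRingEnd ℂ) z := rfl
    have hzn : ((starRingEnd ℂ) z) ^ n = (starRingEnd ℂ) (z ^ n) := (map_pow _ _ _).symm
    have habs : ‖(starRingEnd ℂ) z‖ = ‖z‖ := Complex.norm_conj z
    simp only [hf, hz, hzn, Complex.norm_conj, Complex.conj_re, Complex.conj_im]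
    have hsig : sig ((starRingEnd ℂ) z) = sig z := by rw [sig, sig, habs]
    rw [hsig]
    ring
  have h3 : (∫ z : ℂ, f ((Complex.conjLIE : ℂ → ℂ) z)) = ∫ z : ℂ, - f z := by
    apply MeasureTheory.integral_congr_ae
    exact ae_of_all _ h2
  rw [h3, MeasureTheory.integral_neg] at h1
  linarith

lemma contInt {d : ℝ} (hd : 0 < d) {g₁ g₂ : ℂ → ℝ}
    (hc₁ : Continuous g₁) (hc₂ : Continuous g₂)
    (hb₁ : ∀ w, |g₁ w| ≤ ‖w‖) (hb₂ : ∀ w, |g₂ w| ≤ ‖w‖) (n : ℕ) :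
    ContinuousAt (fun α : ℂ =>
      ∫ z : ℂ, sig z ^ (-(2 + 2 * d)) * FFaux g₁ n α z * FFaux g₂ n α z) 0 := by
  apply MeasureTheory.continuousAt_of_dominated (bound := fun z : ℂ => sig z ^ (-(2 + 2 * d)))
  · filter_upwards with α
    exact (integrable_ZZ hd hc₁ hc₂ hb₁ hb₂ n α).aestronglyMeasurable
  · filter_upwards with α
    apply ae_of_all
    intro z
    have h0 : (0:ℝ) ≤ sig z ^ (-(2 + 2 * d)) := Real.rpow_nonneg (sig_nonneg z) _
    have h1 := absFF_le hb₁ n α z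
    have h2 := absFF_le hb₂ n α z
    rw [Real.norm_eq_abs, abs_mul, abs_mul, _root_.abs_of_nonneg h0]
    calc sig z ^ (-(2 + 2 * d)) * |FFaux g₁ n α z| * |FFaux g₂ n α z|
        = sig z ^ (-(2 + 2 * d)) * (|FFaux g₁ n α z| * |FFaux g₂ n α z|) := by ring
      _ ≤ sig z ^ (-(2 + 2 * d)) * 1 := by
          apply mul_le_mul_of_nonneg_left _ h0
          calc |FFaux g₁ n α z| * |FFaux g₂ n α z| ≤ 1 * 1 :=
                mul_le_mul h1 h2 (abs_nonneg _) zero_le_one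
            _ = 1 := one_mul 1
      _ = sig z ^ (-(2 + 2 * d)) := mul_one _
  · exact sig_integrable hd
  · apply ae_of_all
    intro z
    have : Continuous (fun α : ℂ =>
        sig z ^ (-(2 + 2 * d)) * FFaux g₁ n α z * FFaux g₂ n α z) := by
      apply Continuous.mul
      apply Continuous.mul continuous_const
      · exact (contFF hc₁ n).comp (continuous_id.prodMk continuous_const)
      · exact (contFF hc₂ n).comp (continuous_id.prodMk continuous_const)
    exact this.continuousAt

end GramAux

theorem gram_coefficients
    (a b : ℝ) (hab : GoodPair a b) (N₁ N₂ : ℕ) (lam d : ℝ)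
    (hlam : lam = b * (N₁ : ℝ) / 2 + (N₂ : ℝ) + 1) (hd : 0 < d) (hd' : d < 1 / 4)
    (hnat : lamNat lam) :
    (∫ x : ℂ, sig x ^ (-(2 + 2 * d)) * Z1 lam 0 x * Z2 lam 0 x) = 0 ∧
    (∫ x : ℂ, sig x ^ (-(2 + 2 * d)) * Z2 lam 0 x * Z1 lam 0 x) = 0 ∧
    (∫ x : ℂ, sig x ^ (-(2 + 2 * d)) * Z1 lam 0 x * Z1 lam 0 x) =
      Real.pi * (∫ r in Set.Ioi (0 : ℝ),
        r ^ (2 * lam + 1) / ((1 + r ^ (2 * lam)) ^ 2 * (1 + r) ^ (2 + 2 * d))) ∧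
    (∫ x : ℂ, sig x ^ (-(2 + 2 * d)) * Z2 lam 0 x * Z2 lam 0 x) =
      Real.pi * (∫ r in Set.Ioi (0 : ℝ),
        r ^ (2 * lam + 1) / ((1 + r ^ (2 * lam)) ^ 2 * (1 + r) ^ (2 + 2 * d))) ∧
    0 < Real.pi * (∫ r in Set.Ioi (0 : ℝ),
        r ^ (2 * lam + 1) / ((1 + r ^ (2 * lam)) ^ 2 * (1 + r) ^ (2 + 2 * d))) ∧
    ∃ ε₀ > 0, ∀ α : ℂ, ‖α‖ < ε₀ →
      0 < (∫ x : ℂ, sig x ^ (-(2 + 2 * d)) * Z1 lam α x * Z1 lam α x) *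
            (∫ x : ℂ, sig x ^ (-(2 + 2 * d)) * Z2 lam α x * Z2 lam α x) -
          (∫ x : ℂ, sig x ^ (-(2 + 2 * d)) * Z1 lam α x * Z2 lam α x) *
            (∫ x : ℂ, sig x ^ (-(2 + 2 * d)) * Z2 lam α x * Z1 lam α x) := by
  obtain ⟨n, hn⟩ := hnat
  have hb : (0:ℝ) ≤ b := by
    rcases hab with h | h | h | h | h <;>
      (rw [Prod.mk.injEq] at h; rw [h.2]; norm_num)
  have hlam1 : (1:ℝ) ≤ lam := by
    rw [hlam]
    have h1 : 0 ≤ b * (N₁ : ℝ) := by positivity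
    have h2 : (0:ℝ) ≤ (N₂ : ℝ) := Nat.cast_nonneg _
    linarith
  have hn1 : 1 ≤ n := by
    rw [hn] at hlam1; exact_mod_cast hlam1
  subst hn
  rw [Z1_eq rfl, Z2_eq rfl]
  -- abbreviations
  set τ : ℝ := -(2 + 2 * d) with hτ
  have hFF0 : ∀ (g : ℂ → ℝ) (z : ℂ), FFaux g n 0 z =
      g (z ^ n) / (1 + ‖z ^ n‖ ^ 2) := by
    intro g z; simp [FFaux]
  have hre_eq : (fun z : ℂ => sig z ^ τ * FFaux Complex.re n 0 z * FFaux Complex.re n 0 z) =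
      fun z : ℂ => sig z ^ τ * ((z ^ n).re / (1 + ‖z ^ n‖ ^ 2)) *
        ((z ^ n).re / (1 + ‖z ^ n‖ ^ 2)) := by
    funext z; rw [hFF0]
  have him_eq : (fun z : ℂ => sig z ^ τ * FFaux Complex.im n 0 z * FFaux Complex.im n 0 z) =
      fun z : ℂ => sig z ^ τ * ((z ^ n).im / (1 + ‖z ^ n‖ ^ 2)) *
        ((z ^ n).im / (1 + ‖z ^ n‖ ^ 2)) := by
    funext z; rw [hFF0]
  have hmix_eq : (fun z : ℂ => sig z ^ τ * FFaux Complex.re n 0 z * FFaux Complex.im n 0 z) =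
      fun z : ℂ => sig z ^ τ * ((z ^ n).re / (1 + ‖z ^ n‖ ^ 2)) *
        ((z ^ n).im / (1 + ‖z ^ n‖ ^ 2)) := by
    funext z; rw [hFF0, hFF0]
  have hmix : (∫ z : ℂ, sig z ^ τ * FFaux Complex.re n 0 z * FFaux Complex.im n 0 z) = 0 := by
    rw [hmix_eq]; exact conj_zero n d
  have hmix' : (∫ z : ℂ, sig z ^ τ * FFaux Complex.im n 0 z * FFaux Complex.re n 0 z) = 0 := by
    rw [show (fun z : ℂ => sig z ^ τ * FFaux Complex.im n 0 z * FFaux Complex.re n 0 z) =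
        fun z : ℂ => sig z ^ τ * FFaux Complex.re n 0 z * FFaux Complex.im n 0 z by
      funext z; ring]
    exact hmix
  have hdiag1 : (∫ z : ℂ, sig z ^ τ * FFaux Complex.re n 0 z * FFaux Complex.re n 0 z) =
      Real.pi * ∫ r in Set.Ioi (0:ℝ),
        r ^ (2 * (n:ℝ) + 1) / ((1 + r ^ (2 * (n:ℝ))) ^ 2 * (1 + r) ^ (2 + 2 * d)) := by
    rw [hre_eq]; exact polar_diag n hn1 d
  have hdiag2 : (∫ z : ℂ, sig z ^ τ * FFaux Complex.im n 0 z * FFaux Complex.im n 0 z) =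
      Real.pi * ∫ r in Set.Ioi (0:ℝ),
        r ^ (2 * (n:ℝ) + 1) / ((1 + r ^ (2 * (n:ℝ))) ^ 2 * (1 + r) ^ (2 + 2 * d)) := by
    rw [him_eq, rot_diag n hn1 d, ← hre_eq]; exact hdiag1
  -- positivity of the diagonal value
  have hpos : 0 < ∫ z : ℂ, sig z ^ τ * FFaux Complex.re n 0 z * FFaux Complex.re n 0 z := by
    set h : ℂ → ℝ := fun z => sig z ^ τ * FFaux Complex.re n 0 z * FFaux Complex.re n 0 z with hh
    have hnonneg : 0 ≤ᵐ[volume] h := by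
      apply ae_of_all
      intro z
      have h0 : (0:ℝ) ≤ sig z ^ τ := Real.rpow_nonneg (sig_nonneg z) _
      have : h z = sig z ^ τ * FFaux Complex.re n 0 z ^ 2 := by rw [hh]; ring
      rw [this]; positivity
    have hint : Integrable h :=
      integrable_ZZ hd Complex.continuous_re Complex.continuous_re
        (fun w => Complex.abs_re_le_norm w) (fun w => Complex.abs_re_le_norm w) n 0
    rw [MeasureTheory.integral_pos_iff_support_of_nonneg_ae hnonneg hint]
    have hcont : Continuous h := by
      apply Continuous.mul
      apply Continuous.mul
      · exact continuous_sig.rpow_const (fun x => Or.inl (by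
          have := norm_nonneg x; simp only [sig]; positivity))
      · exact (contFF Complex.continuous_re n).comp
          (continuous_const.prodMk continuous_id)
      · exact (contFF Complex.continuous_re n).comp
          (continuous_const.prodMk continuous_id)
    have hopen : IsOpen (Function.support h) := by
      rw [Function.support]
      exact isOpen_ne.preimage hcont
    have hmem : (1:ℂ) ∈ Function.support h := by
      have hF1 : FFaux Complex.re n 0 1 = 1/2 := by
        norm_num [FFaux]
      have hs1 : (0:ℝ) < sig 1 := by rw [sig]; positivity
      have hsig1 : (0:ℝ) < sig 1 ^ τ := Real.rpow_pos_of_pos hs1 _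
      simp only [Function.mem_support, hh, hF1]
      have : (0:ℝ) < sig 1 ^ τ * (1/2) * (1/2) := by linarith
      exact ne_of_gt this
    exact hopen.measure_pos volume ⟨1, hmem⟩
  have hP : 0 < Real.pi * ∫ r in Set.Ioi (0:ℝ),
      r ^ (2 * (n:ℝ) + 1) / ((1 + r ^ (2 * (n:ℝ))) ^ 2 * (1 + r) ^ (2 + 2 * d)) := by
    rw [← hdiag1]; exact hpos
  refine ⟨hmix, hmix', hdiag1, hdiag2, hP, ?_⟩
  -- continuity in α
  have hc11 := contInt hd Complex.continuous_re Complex.continuous_re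
    (fun w => Complex.abs_re_le_norm w) (fun w => Complex.abs_re_le_norm w) n
  have hc22 := contInt hd Complex.continuous_im Complex.continuous_im
    (fun w => Complex.abs_im_le_norm w) (fun w => Complex.abs_im_le_norm w) n
  have hc12 := contInt hd Complex.continuous_re Complex.continuous_im
    (fun w => Complex.abs_re_le_norm w) (fun w => Complex.abs_im_le_norm w) n
  have hc21 := contInt hd Complex.continuous_im Complex.continuous_re
    (fun w => Complex.abs_im_le_norm w) (fun w => Complex.abs_re_le_norm w) n
  set D : ℂ → ℝ := fun α =>
    (∫ z : ℂ, sig z ^ τ * FFaux Complex.re n α z * FFaux Complex.re n α z) *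
      (∫ z : ℂ, sig z ^ τ * FFaux Complex.im n α z * FFaux Complex.im n α z) -
    (∫ z : ℂ, sig z ^ τ * FFaux Complex.re n α z * FFaux Complex.im n α z) *
      (∫ z : ℂ, sig z ^ τ * FFaux Complex.im n α z * FFaux Complex.re n α z) with hD
  have hDc : ContinuousAt D 0 := ((hc11.mul hc22).sub (hc12.mul hc21))
  have hD0 : 0 < D 0 := by
    rw [hD]
    simp only
    rw [hmix, hmix', hdiag1, hdiag2]
    have := hP
    nlinarith
  have hev : ∀ᶠ α in nhds (0:ℂ), 0 < D α := hDc.eventually (eventually_gt_nhds hD0)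
  rw [Metric.eventually_nhds_iff] at hev
  obtain ⟨ε, hε, H⟩ := hev
  refine ⟨ε, hε, fun α hα => ?_⟩
  exact H (show dist α 0 < ε by rwa [Complex.dist_eq, sub_zero])

end

end CSpaper
end
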